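/- arXiv:1311.6856 — 6 statements merged into one kernel-verified Lean document; each statement's English description precedes it below -/
import Mathlib

section
/- Let G and H be connected finite simple graphs, neither of which is a complete graph, and suppose G and H are Q-equivalent. Then the vertex connectivity of G equals the vertex connectivity of H, where the vertex connectivity of a connected non-complete graph is the minimum cardinality of a vertex subset S such that the induced subgraph on the complement of S has at least two connected components. -/
open SimpleGraph

/-- `qij G i j` is the number of vertex subsets `X` with `|X| = i` such that the
induced subgraph `G[X]` has exactly `j` connected components. -/
noncomputable def qij {V : Type*} [Fintype V] (G : SimpleGraph V) (i j : ℕ) : ℕ :=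
  Nat.card {X : Finset V // X.card = i ∧
    Nat.card (G.induce (X : Set V)).ConnectedComponent = j}

/-- Two graphs are `Q`-equivalent if they have the same subgraph component polynomial,
i.e. `q_{i,j}` agree for all `i, j`. -/
def QEquiv {V W : Type*} [Fintype V] [Fintype W]
    (G : SimpleGraph V) (H : SimpleGraph W) : Prop :=
  ∀ i j, qij G i j = qij H i j

/-- The vertex connectivity of a connected non-complete graph: the minimum cardinality
of a vertex subset `S` whose removal leaves an induced subgraph with at least two
connected components. -/
noncomputable def connectivity {V : Type*} [Fintype V] (G : SimpleGraph V) : ℕ :=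
  sInf {s | ∃ S : Finset V, S.card = s ∧
    2 ≤ Nat.card (G.induce ((↑S)ᶜ : Set V)).ConnectedComponent}

lemma qij_ne_zero_iff {V : Type*} [Fintype V] (G : SimpleGraph V) (i j : ℕ) :
    qij G i j ≠ 0 ↔ ∃ X : Finset V, X.card = i ∧
      Nat.card (G.induce (X : Set V)).ConnectedComponent = j := by
  rw [qij, Nat.card_ne_zero]
  constructor
  · rintro ⟨⟨⟨X, h⟩⟩, _⟩; exact ⟨X, h⟩
  · rintro ⟨X, h⟩; exact ⟨⟨⟨X, h⟩⟩, inferInstance⟩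

lemma qij_univ_ne_zero {V : Type*} [Fintype V] (G : SimpleGraph V) (hG : G.Connected) :
    qij G (Fintype.card V) 1 ≠ 0 := by
  rw [qij_ne_zero_iff]
  refine ⟨Finset.univ, Finset.card_univ, ?_⟩
  have hconn : (G.induce ((Finset.univ : Finset V) : Set V)).Connected := by
    rw [Finset.coe_univ]
    exact (induceUnivIso G).connected_iff.mpr hG
  rw [Nat.card_eq_one_iff_unique]
  constructor
  · constructor
    intro a b
    refine a.ind (fun v => b.ind (fun w => ?_))
    exact ConnectedComponent.sound (hconn.preconnected v w)
  · exact ⟨(G.induce _).connectedComponentMk hconn.nonempty.some⟩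

lemma qij_zero_of_gt {V : Type*} [Fintype V] (G : SimpleGraph V) {i : ℕ}
    (hi : Fintype.card V < i) (j : ℕ) : qij G i j = 0 := by
  rw [qij, Nat.card_eq_zero]
  left
  constructor
  rintro ⟨X, hX, -⟩
  exact absurd (X.card_le_univ.trans_eq Finset.card_univ) (by omega)

lemma connectivity_eq {V : Type*} [Fintype V] (G : SimpleGraph V) :
    connectivity G = sInf {s | s ≤ Fintype.card V ∧
      ∃ j, 2 ≤ j ∧ qij G (Fintype.card V - s) j ≠ 0} := by
  classical
  refine congrArg sInf ?_
  ext s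
  simp only [Set.mem_setOf_eq]
  constructor
  · rintro ⟨S, rfl, hS⟩
    refine ⟨S.card_le_univ.trans_eq Finset.card_univ, _, hS, ?_⟩
    rw [qij_ne_zero_iff]
    refine ⟨Sᶜ, ?_, ?_⟩
    · rw [Finset.card_compl]
    · rw [Finset.coe_compl]
  · rintro ⟨hs, j, hj, hq⟩
    rw [qij_ne_zero_iff] at hq
    obtain ⟨X, hX, hXj⟩ := hq
    refine ⟨Xᶜ, ?_, ?_⟩
    · rw [Finset.card_compl, hX]; omega
    · rw [Finset.coe_compl, compl_compl, hXj]; exact hj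

theorem connectivity_determined_by_Q
    {V W : Type*} [Fintype V] [Fintype W]
    (G : SimpleGraph V) (H : SimpleGraph W)
    (hGconn : G.Connected) (hHconn : H.Connected)
    (hGncpl : G ≠ ⊤) (hHncpl : H ≠ ⊤)
    (hQ : QEquiv G H) :
    connectivity G = connectivity H := by
  have hcard : Fintype.card V = Fintype.card W := by
    by_contra hne
    rcases Nat.lt_or_ge (Fintype.card V) (Fintype.card W) with h | h
    · exact (qij_univ_ne_zero H hHconn)
        ((hQ (Fintype.card W) 1 ▸ qij_zero_of_gt G h 1))
    · rcases lt_or_eq_of_le h with h | h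
      · exact (qij_univ_ne_zero G hGconn)
          ((hQ (Fintype.card V) 1).trans (qij_zero_of_gt H h 1))
      · exact hne h.symm
  rw [connectivity_eq, connectivity_eq, hcard]
  refine congrArg sInf ?_
  ext s
  simp only [Set.mem_setOf_eq, hQ (Fintype.card W - s)]
end

section
/- Let G be a k-regular finite simple graph and let H be a finite simple graph that is Q-equivalent to G. Then H is k-regular. -/
open SimpleGraph

section QAux
open Finset
set_option linter.unusedSectionVars false
set_option maxHeartbeats 1000000

variable {V : Type*} [Fintype V] [DecidableEq V]

noncomputable def ncompQ (G : SimpleGraph V) (X : Finset V) : ℕ :=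
  Nat.card (G.induce (X : Set V)).ConnectedComponent

def aQ (G : SimpleGraph V) [DecidableRel G.Adj] (X : Finset V) : ℕ :=
  ∑ u ∈ X, ∑ v ∈ X, if G.Adj u v then 1 else 0

def fQ (G : SimpleGraph V) [DecidableRel G.Adj] (X : Finset V) : ℕ :=
  ∑ w ∈ X, ∑ u ∈ X, ∑ v ∈ X, if u ≠ v ∧ G.Adj w u ∧ G.Adj w v then 1 else 0

lemma reachable_eq_of_isolated {α : Type*} {H : SimpleGraph α} {v w : α}
    (hv : ∀ x, ¬ H.Adj v x) (h : H.Reachable v w) : v = w := by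
  obtain ⟨p⟩ := h
  cases p with
  | nil => rfl
  | cons h _ => exact absurd h (hv _)

lemma ncompQ_pair_adj {G : SimpleGraph V} {a b : V} (hab : G.Adj a b) :
    ncompQ G {a, b} = 1 := by
  have ha : a ∈ (({a, b} : Finset V) : Set V) := by simp
  rw [ncompQ, Nat.card_eq_one_iff_unique]
  have key : ∀ z : (({a, b} : Finset V) : Set V),
      (G.induce (({a, b} : Finset V) : Set V)).Reachable z ⟨a, ha⟩ := by
    rintro ⟨z, hz⟩
    simp only [coe_insert, coe_singleton, Set.mem_insert_iff, Set.mem_singleton_iff] at hz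
    rcases hz with rfl | rfl
    · exact Reachable.refl _
    · exact Adj.reachable (by simp only [comap_adj, Function.Embedding.coe_subtype]; exact hab.symm)
  refine ⟨⟨ConnectedComponent.ind₂ fun x y => ConnectedComponent.sound
      ((key x).trans (key y).symm)⟩, ⟨_root_.SimpleGraph.connectedComponentMk _ ⟨a, ha⟩⟩⟩

lemma ncompQ_conn3 {G : SimpleGraph V} {a b c : V} (hab : G.Adj a b) (hbc : G.Adj b c) :
    ncompQ G {a, b, c} = 1 := by
  have hb : b ∈ (({a, b, c} : Finset V) : Set V) := by simp
  rw [ncompQ, Nat.card_eq_one_iff_unique]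
  have key : ∀ z : (({a, b, c} : Finset V) : Set V),
      (G.induce (({a, b, c} : Finset V) : Set V)).Reachable z ⟨b, hb⟩ := by
    rintro ⟨z, hz⟩
    simp only [coe_insert, coe_singleton, Set.mem_insert_iff, Set.mem_singleton_iff] at hz
    rcases hz with rfl | rfl | rfl
    · exact Adj.reachable (by simp only [comap_adj, Function.Embedding.coe_subtype]; exact hab)
    · exact Reachable.refl _
    · exact Adj.reachable (by simp only [comap_adj, Function.Embedding.coe_subtype]; exact hbc.symm)
  refine ⟨⟨ConnectedComponent.ind₂ fun x y => ConnectedComponent.sound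
      ((key x).trans (key y).symm)⟩, ⟨_root_.SimpleGraph.connectedComponentMk _ ⟨b, hb⟩⟩⟩

lemma ncompQ_3_oneedge {G : SimpleGraph V} {a b c : V}
    (hab : G.Adj a b) (hac : ¬ G.Adj a c) (hbc : ¬ G.Adj b c)
    (hac' : a ≠ c) (hbc' : b ≠ c) :
    ncompQ G {a, b, c} = 2 := by
  set GI := G.induce (({a, b, c} : Finset V) : Set V) with hGI
  have ha : a ∈ (({a, b, c} : Finset V) : Set V) := by simp
  have hc : c ∈ (({a, b, c} : Finset V) : Set V) := by simp
  set x := GI.connectedComponentMk ⟨a, ha⟩ with hx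
  set y := GI.connectedComponentMk ⟨c, hc⟩ with hy
  have hciso : ∀ z, ¬ GI.Adj ⟨c, hc⟩ z := by
    rintro ⟨z, hz⟩ hadj
    simp only [coe_insert, coe_singleton, Set.mem_insert_iff, Set.mem_singleton_iff] at hz
    rw [hGI] at hadj
    simp only [comap_adj, Function.Embedding.coe_subtype] at hadj
    rcases hz with rfl | rfl | rfl
    · exact hac hadj.symm
    · exact hbc hadj.symm
    · exact G.irrefl hadj
  have hxy : x ≠ y := by
    intro h
    have := reachable_eq_of_isolated hciso (ConnectedComponent.exact h.symm)
    exact hac' (congrArg Subtype.val this).symm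
  have huniv : (Set.univ : Set GI.ConnectedComponent) = {x, y} := by
    ext C
    simp only [Set.mem_univ, true_iff, Set.mem_insert_iff, Set.mem_singleton_iff]
    induction C using ConnectedComponent.ind with
    | _ z =>
      obtain ⟨z, hz⟩ := z
      simp only [coe_insert, coe_singleton, Set.mem_insert_iff, Set.mem_singleton_iff] at hz
      rcases hz with rfl | rfl | rfl
      · left; rfl
      · left
        exact ConnectedComponent.sound (Adj.reachable (by simp only [hGI, comap_adj, Function.Embedding.coe_subtype]; exact hab.symm))
      · right; rfl
  rw [ncompQ, ← Set.ncard_univ]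
  rw [show (Set.univ : Set (G.induce (({a, b, c} : Finset V) : Set V)).ConnectedComponent) = {x, y} from huniv]
  exact Set.ncard_pair hxy

lemma ncompQ_noedge {G : SimpleGraph V} {X : Finset V}
    (h : ∀ u ∈ X, ∀ v ∈ X, ¬ G.Adj u v) : ncompQ G X = X.card := by
  have hbot : G.induce (X : Set V) = ⊥ := by
    ext a b
    simp only [comap_adj, bot_adj, iff_false]
    exact h a a.2 b b.2
  rw [ncompQ, hbot]
  have hbij : Function.Bijective ((⊥ : SimpleGraph (X : Set V)).connectedComponentMk) := by
    constructor
    · intro a b hab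
      exact reachable_bot.mp (ConnectedComponent.exact hab)
    · exact ConnectedComponent.ind fun v => ⟨v, rfl⟩
  rw [← Nat.card_eq_of_bijective _ hbij, Nat.card_coe_set_eq, Set.ncard_coe_finset]


lemma sum3 {M : Type*} [AddCommMonoid M] {a b c : V} (hab : a ≠ b) (hac : a ≠ c)
    (hbc : b ≠ c) (g : V → M) :
    ∑ x ∈ ({a, b, c} : Finset V), g x = g a + g b + g c := by
  rw [Finset.sum_insert (by simp [hab, hac]), Finset.sum_pair hbc, add_assoc]


lemma perX1 {G : SimpleGraph V} {X : Finset V} (hX : X.card = 1) : ncompQ G X = 1 := by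
  obtain ⟨v, rfl⟩ := Finset.card_eq_one.mp hX
  have := ncompQ_noedge (G := G) (X := {v}) (by
    intro u hu w hw
    simp only [mem_singleton] at hu hw
    subst hu; subst hw; exact G.irrefl)
  simpa using this

lemma perX2 {G : SimpleGraph V} [DecidableRel G.Adj] {X : Finset V} (hX : X.card = 2) :
    aQ G X = if ncompQ G X = 1 then 2 else 0 := by
  obtain ⟨u, v, huv, rfl⟩ := Finset.card_eq_two.mp hX
  by_cases p : G.Adj u v
  · rw [ncompQ_pair_adj p, if_pos rfl]
    simp only [aQ, Finset.sum_pair huv]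
    simp [p, p.symm, G.irrefl]
  · have hvu : ¬ G.Adj v u := fun h => p h.symm
    have h2 : ncompQ G {u, v} = 2 := by
      rw [ncompQ_noedge, Finset.card_pair huv]
      intro x hx y hy h
      simp only [mem_insert, mem_singleton] at hx hy
      rcases hx with rfl | rfl <;> rcases hy with rfl | rfl
      exacts [G.irrefl h, p h, hvu h, G.irrefl h]
    rw [h2]
    simp only [aQ, Finset.sum_pair huv]
    simp [p, hvu, G.irrefl]

lemma perX3 {G : SimpleGraph V} [DecidableRel G.Adj] {X : Finset V} (hX : X.card = 3) :
    fQ G X + ((if ncompQ G X = 1 then 6 else 0) + (if ncompQ G X = 2 then 4 else 0))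
      = 2 * aQ G X := by
  obtain ⟨a, b, c, hab', hac', hbc', rfl⟩ := Finset.card_eq_three.mp hX
  have hba' : b ≠ a := hab'.symm
  have hca' : c ≠ a := hac'.symm
  have hcb' : c ≠ b := hbc'.symm
  by_cases pab : G.Adj a b <;> by_cases pac : G.Adj a c <;> by_cases pbc : G.Adj b c
  · -- triangle
    rw [ncompQ_conn3 pab pbc,
      show aQ G {a,b,c} = 6 by
        simp only [aQ, sum3 hab' hac' hbc']
        simp [pab, pab.symm, pac, pac.symm, pbc, pbc.symm, G.irrefl],
      show fQ G {a,b,c} = 6 by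
        simp only [fQ, sum3 hab' hac' hbc']
        simp [hab', hac', hbc', hba', hca', hcb',
          pab, pab.symm, pac, pac.symm, pbc, pbc.symm, G.irrefl]]
    norm_num
  · -- edges ab, ac; center a
    have ncbc : ¬ G.Adj c b := fun h => pbc h.symm
    have h1 : ncompQ G {a,b,c} = 1 := by
      rw [Finset.insert_comm]; exact ncompQ_conn3 pab.symm pac
    rw [h1,
      show aQ G {a,b,c} = 4 by
        simp only [aQ, sum3 hab' hac' hbc']
        simp [pab, pab.symm, pac, pac.symm, pbc, ncbc, G.irrefl],
      show fQ G {a,b,c} = 2 by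
        simp only [fQ, sum3 hab' hac' hbc']
        simp [hab', hac', hbc', hba', hca', hcb',
          pab, pab.symm, pac, pac.symm, pbc, ncbc, G.irrefl]]
    norm_num
  · -- edges ab, bc; center b
    have ncac : ¬ G.Adj c a := fun h => pac h.symm
    rw [ncompQ_conn3 pab pbc,
      show aQ G {a,b,c} = 4 by
        simp only [aQ, sum3 hab' hac' hbc']
        simp [pab, pab.symm, pac, ncac, pbc, pbc.symm, G.irrefl],
      show fQ G {a,b,c} = 2 by
        simp only [fQ, sum3 hab' hac' hbc']
        simp [hab', hac', hbc', hba', hca', hcb',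
          pab, pab.symm, pac, ncac, pbc, pbc.symm, G.irrefl]]
    norm_num
  · -- edge ab only
    have ncac : ¬ G.Adj c a := fun h => pac h.symm
    have ncbc : ¬ G.Adj c b := fun h => pbc h.symm
    rw [ncompQ_3_oneedge pab pac pbc hac' hbc',
      show aQ G {a,b,c} = 2 by
        simp only [aQ, sum3 hab' hac' hbc']
        simp [pab, pab.symm, pac, ncac, pbc, ncbc, G.irrefl],
      show fQ G {a,b,c} = 0 by
        simp only [fQ, sum3 hab' hac' hbc']
        simp [hab', hac', hbc', hba', hca', hcb',
          pab, pab.symm, pac, ncac, pbc, ncbc, G.irrefl]]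
    norm_num
  · -- edges ac, bc; center c
    have ncab : ¬ G.Adj b a := fun h => pab h.symm
    have h1 : ncompQ G {a,b,c} = 1 := by
      rw [show ({a,b,c} : Finset V) = {a,c,b} from by
        rw [Finset.pair_comm b c]]
      exact ncompQ_conn3 pac pbc.symm
    rw [h1,
      show aQ G {a,b,c} = 4 by
        simp only [aQ, sum3 hab' hac' hbc']
        simp [pab, ncab, pac, pac.symm, pbc, pbc.symm, G.irrefl],
      show fQ G {a,b,c} = 2 by
        simp only [fQ, sum3 hab' hac' hbc']
        simp [hab', hac', hbc', hba', hca', hcb',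
          pab, ncab, pac, pac.symm, pbc, pbc.symm, G.irrefl]]
    norm_num
  · -- edge ac only
    have ncab : ¬ G.Adj b a := fun h => pab h.symm
    have ncbc : ¬ G.Adj c b := fun h => pbc h.symm
    have h1 : ncompQ G {a,b,c} = 2 := by
      rw [show ({a,b,c} : Finset V) = {a,c,b} from by rw [Finset.pair_comm b c]]
      exact ncompQ_3_oneedge pac pab ncbc hab' hcb'
    rw [h1,
      show aQ G {a,b,c} = 2 by
        simp only [aQ, sum3 hab' hac' hbc']
        simp [pab, ncab, pac, pac.symm, pbc, ncbc, G.irrefl],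
      show fQ G {a,b,c} = 0 by
        simp only [fQ, sum3 hab' hac' hbc']
        simp [hab', hac', hbc', hba', hca', hcb',
          pab, ncab, pac, pac.symm, pbc, ncbc, G.irrefl]]
    norm_num
  · -- edge bc only
    have ncab : ¬ G.Adj b a := fun h => pab h.symm
    have ncac : ¬ G.Adj c a := fun h => pac h.symm
    have h1 : ncompQ G {a,b,c} = 2 := by
      rw [show ({a,b,c} : Finset V) = {b,c,a} from by
        ext x; simp only [mem_insert, mem_singleton]; tauto]
      exact ncompQ_3_oneedge pbc ncab ncac hba' hca'
    rw [h1,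
      show aQ G {a,b,c} = 2 by
        simp only [aQ, sum3 hab' hac' hbc']
        simp [pab, ncab, pac, ncac, pbc, pbc.symm, G.irrefl],
      show fQ G {a,b,c} = 0 by
        simp only [fQ, sum3 hab' hac' hbc']
        simp [hab', hac', hbc', hba', hca', hcb',
          pab, ncab, pac, ncac, pbc, pbc.symm, G.irrefl]]
    norm_num
  · -- no edges
    have ncab : ¬ G.Adj b a := fun h => pab h.symm
    have ncac : ¬ G.Adj c a := fun h => pac h.symm
    have ncbc : ¬ G.Adj c b := fun h => pbc h.symm
    have h1 : ncompQ G {a,b,c} = 3 := by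
      rw [ncompQ_noedge]
      · rw [Finset.card_insert_of_notMem (by simp [hab', hac']), Finset.card_pair hbc']
      · intro x hx y hy h
        simp only [mem_insert, mem_singleton] at hx hy
        rcases hx with rfl | rfl | rfl <;> rcases hy with rfl | rfl | rfl
        exacts [G.irrefl h, pab h, pac h, ncab h, G.irrefl h, pbc h, ncac h, ncbc h, G.irrefl h]
    rw [h1,
      show aQ G {a,b,c} = 0 by
        simp only [aQ, sum3 hab' hac' hbc']
        simp [pab, ncab, pac, ncac, pbc, ncbc, G.irrefl],
      show fQ G {a,b,c} = 0 by
        simp only [fQ, sum3 hab' hac' hbc']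
        simp [hab', hac', hbc', hba', hca', hcb',
          pab, ncab, pac, ncac, pbc, ncbc, G.irrefl]]
    norm_num

lemma qij_eq (G : SimpleGraph V) (i j : ℕ) :
    qij G i j = ((Finset.powersetCard i (univ : Finset V)).filter
      (fun X => ncompQ G X = j)).card := by
  classical
  rw [qij, Nat.card_eq_fintype_card, Fintype.card_subtype]
  congr 1
  ext X
  simp [Finset.mem_powersetCard_univ, ncompQ, and_comm]


lemma card_supersets (s : Finset V) (r : ℕ) (hsr : s.card ≤ r) :
    ((Finset.powersetCard r (univ : Finset V)).filter (fun X => s ⊆ X)).card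
      = (Fintype.card V - s.card).choose (r - s.card) := by
  rw [← Finset.card_compl s, ← Finset.card_powersetCard (r - s.card) sᶜ]
  apply Finset.card_bij' (fun X _ => X \ s) (fun Y _ => Y ∪ s)
  · intro X hX
    rw [Finset.mem_filter, Finset.mem_powersetCard_univ] at hX
    rw [Finset.mem_powersetCard]
    constructor
    · intro x hx
      rw [Finset.mem_sdiff] at hx
      simpa [Finset.mem_compl] using hx.2
    · rw [Finset.card_sdiff_of_subset hX.2, hX.1]
  · intro Y hY
    rw [Finset.mem_powersetCard] at hY
    have hdisj : Disjoint Y s := by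
      rw [Finset.disjoint_left]
      intro x hx hxs
      have := hY.1 hx
      rw [Finset.mem_compl] at this
      exact this hxs
    rw [Finset.mem_filter, Finset.mem_powersetCard_univ]
    refine ⟨?_, Finset.subset_union_right⟩
    rw [Finset.card_union_of_disjoint hdisj, hY.2]
    omega
  · intro X hX
    rw [Finset.mem_filter] at hX
    exact Finset.sdiff_union_of_subset hX.2
  · intro Y hY
    rw [Finset.mem_powersetCard] at hY
    have hdisj : Disjoint Y s := by
      rw [Finset.disjoint_left]
      intro x hx hxs
      have := hY.1 hx
      rw [Finset.mem_compl] at this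
      exact this hxs
    rw [Finset.union_sdiff_right, Finset.sdiff_eq_self_of_disjoint hdisj]

lemma aQ_eq (G : SimpleGraph V) [DecidableRel G.Adj] (X : Finset V) :
    aQ G X = ∑ u : V, ∑ v : V, if (u ∈ X ∧ v ∈ X) ∧ G.Adj u v then 1 else 0 := by
  rw [aQ]
  have step1 : (∑ u ∈ X, ∑ v ∈ X, if G.Adj u v then (1:ℕ) else 0)
      = ∑ u ∈ X, ∑ v : V, if (u ∈ X ∧ v ∈ X) ∧ G.Adj u v then 1 else 0 := by
    refine Finset.sum_congr rfl fun u hu => ?_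
    rw [show (∑ v ∈ X, if G.Adj u v then (1:ℕ) else 0)
        = ∑ v ∈ X, if (u ∈ X ∧ v ∈ X) ∧ G.Adj u v then 1 else 0 from
      Finset.sum_congr rfl fun v hv => by simp [hu, hv]]
    exact Finset.sum_subset (Finset.subset_univ X) (fun v _ hv => by simp [hv])
  rw [step1, Finset.sum_subset (Finset.subset_univ X)]
  intro u _ hu
  exact Finset.sum_eq_zero fun v _ => by simp [hu]

lemma fQ_eq (G : SimpleGraph V) [DecidableRel G.Adj] (X : Finset V) :
    fQ G X = ∑ w : V, ∑ u : V, ∑ v : V,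
      if (w ∈ X ∧ u ∈ X ∧ v ∈ X) ∧ (u ≠ v ∧ G.Adj w u ∧ G.Adj w v) then 1 else 0 := by
  rw [fQ]
  have step1 : (∑ w ∈ X, ∑ u ∈ X, ∑ v ∈ X, if u ≠ v ∧ G.Adj w u ∧ G.Adj w v then (1:ℕ) else 0)
      = ∑ w ∈ X, ∑ u : V, ∑ v : V,
          if (w ∈ X ∧ u ∈ X ∧ v ∈ X) ∧ (u ≠ v ∧ G.Adj w u ∧ G.Adj w v) then 1 else 0 := by
    refine Finset.sum_congr rfl fun w hw => ?_
    have inner : (∑ u ∈ X, ∑ v ∈ X, if u ≠ v ∧ G.Adj w u ∧ G.Adj w v then (1:ℕ) else 0)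
        = ∑ u ∈ X, ∑ v : V,
            if (w ∈ X ∧ u ∈ X ∧ v ∈ X) ∧ (u ≠ v ∧ G.Adj w u ∧ G.Adj w v) then 1 else 0 := by
      refine Finset.sum_congr rfl fun u hu => ?_
      rw [show (∑ v ∈ X, if u ≠ v ∧ G.Adj w u ∧ G.Adj w v then (1:ℕ) else 0)
          = ∑ v ∈ X, if (w ∈ X ∧ u ∈ X ∧ v ∈ X) ∧ (u ≠ v ∧ G.Adj w u ∧ G.Adj w v) then 1 else 0 from
        Finset.sum_congr rfl fun v hv => by simp [hw, hu, hv]]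
      exact Finset.sum_subset (Finset.subset_univ X) (fun v _ hv => by simp [hv])
    rw [inner, Finset.sum_subset (Finset.subset_univ X)]
    intro u _ hu
    exact Finset.sum_eq_zero fun v _ => by simp [hu]
  rw [step1, Finset.sum_subset (Finset.subset_univ X)]
  intro w _ hw
  exact Finset.sum_eq_zero fun u _ => Finset.sum_eq_zero fun v _ => by simp [hw]

lemma sum_ite_const {α : Type*} [Fintype α] (p : α → Prop) [DecidablePred p] (C : ℕ) :
    (∑ x : α, if p x then C else 0) = C * (univ.filter p).card := by
  rw [Finset.card_filter, Finset.mul_sum]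
  exact Finset.sum_congr rfl fun x _ => by split <;> simp

lemma degree_filter (G : SimpleGraph V) [DecidableRel G.Adj] (u : V) :
    (univ.filter (G.Adj u)).card = G.degree u := by
  rw [← neighborFinset_eq_filter]; rfl

lemma sum_aQ (G : SimpleGraph V) [DecidableRel G.Adj] (r : ℕ) (hr : 2 ≤ r)
    (hcount : ∀ u v : V, u ≠ v →
      ((Finset.powersetCard r (univ : Finset V)).filter (fun X => u ∈ X ∧ v ∈ X)).card
        = (Fintype.card V - 2).choose (r - 2)) :
    ∑ X ∈ Finset.powersetCard r (univ : Finset V), aQ G X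
      = (∑ v, G.degree v) * (Fintype.card V - 2).choose (r - 2) := by
  set C := (Fintype.card V - 2).choose (r - 2) with hC
  simp only [aQ_eq]
  rw [Finset.sum_comm]
  have swap2 : ∀ u : V, (∑ X ∈ Finset.powersetCard r (univ : Finset V), ∑ v : V,
        if (u ∈ X ∧ v ∈ X) ∧ G.Adj u v then (1:ℕ) else 0)
      = ∑ v : V, ∑ X ∈ Finset.powersetCard r (univ : Finset V),
        if (u ∈ X ∧ v ∈ X) ∧ G.Adj u v then (1:ℕ) else 0 := fun u => Finset.sum_comm
  simp only [swap2]
  have key : ∀ u v : V, (∑ X ∈ Finset.powersetCard r (univ : Finset V),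
        if (u ∈ X ∧ v ∈ X) ∧ G.Adj u v then (1:ℕ) else 0)
      = if G.Adj u v then C else 0 := by
    intro u v
    by_cases hA : G.Adj u v
    · rw [if_pos hA, ← hcount u v hA.ne]
      rw [Finset.card_filter]
      refine Finset.sum_congr rfl fun X _ => by simp [hA]
    · rw [if_neg hA]
      exact Finset.sum_eq_zero fun X _ => by simp [hA]
  simp only [key]
  have perU : ∀ u : V, (∑ v : V, if G.Adj u v then C else 0) = C * G.degree u := by
    intro u
    rw [sum_ite_const, degree_filter]
  simp only [perU]
  rw [← Finset.mul_sum, mul_comm]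

lemma sum_fQ (G : SimpleGraph V) [DecidableRel G.Adj]
    (hcount : ∀ w u v : V, w ≠ u → w ≠ v → u ≠ v →
      ((Finset.powersetCard 3 (univ : Finset V)).filter
        (fun X => w ∈ X ∧ u ∈ X ∧ v ∈ X)).card = 1) :
    (∑ X ∈ Finset.powersetCard 3 (univ : Finset V), fQ G X) + (∑ w, G.degree w)
      = ∑ w, G.degree w * G.degree w := by
  simp only [fQ_eq]
  rw [Finset.sum_comm]
  have swap2 : ∀ w : V, (∑ X ∈ Finset.powersetCard 3 (univ : Finset V), ∑ u : V, ∑ v : V,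
        if (w ∈ X ∧ u ∈ X ∧ v ∈ X) ∧ (u ≠ v ∧ G.Adj w u ∧ G.Adj w v) then (1:ℕ) else 0)
      = ∑ u : V, ∑ v : V, ∑ X ∈ Finset.powersetCard 3 (univ : Finset V),
        if (w ∈ X ∧ u ∈ X ∧ v ∈ X) ∧ (u ≠ v ∧ G.Adj w u ∧ G.Adj w v) then (1:ℕ) else 0 := by
    intro w
    rw [Finset.sum_comm]
    exact Finset.sum_congr rfl fun u _ => Finset.sum_comm
  simp only [swap2]
  have key : ∀ w u v : V, (∑ X ∈ Finset.powersetCard 3 (univ : Finset V),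
        if (w ∈ X ∧ u ∈ X ∧ v ∈ X) ∧ (u ≠ v ∧ G.Adj w u ∧ G.Adj w v) then (1:ℕ) else 0)
      = if u ≠ v ∧ G.Adj w u ∧ G.Adj w v then 1 else 0 := by
    intro w u v
    by_cases hP : u ≠ v ∧ G.Adj w u ∧ G.Adj w v
    · rw [if_pos hP,
        show (∑ X ∈ Finset.powersetCard 3 (univ : Finset V),
            if (w ∈ X ∧ u ∈ X ∧ v ∈ X) ∧ (u ≠ v ∧ G.Adj w u ∧ G.Adj w v) then (1:ℕ) else 0)
          = ∑ X ∈ Finset.powersetCard 3 (univ : Finset V),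
            if (w ∈ X ∧ u ∈ X ∧ v ∈ X) then (1:ℕ) else 0 from
        Finset.sum_congr rfl fun X _ => by simp [hP],
        ← Finset.card_filter]
      exact hcount w u v hP.2.1.ne hP.2.2.ne hP.1
    · rw [if_neg hP]
      exact Finset.sum_eq_zero fun X _ => by simp [hP]
  simp only [key]
  -- now prove: Σ_w Σ_u Σ_v ind(u≠v ∧ A u ∧ A v) + Σ_w deg = Σ_w deg².
  rw [← Finset.sum_add_distrib]
  refine Finset.sum_congr rfl fun w _ => ?_
  set A := G.Adj w with hA
  have diag : (∑ u : V, ∑ v : V, if u = v ∧ A u ∧ A v then (1:ℕ) else 0)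
      = ∑ u : V, if A u then 1 else 0 := by
    refine Finset.sum_congr rfl fun u _ => ?_
    rw [Finset.sum_eq_single u]
    · by_cases h : A u <;> simp [h]
    · intro v _ hvu
      exact if_neg fun hc => hvu hc.1.symm
    · intro h; exact absurd (Finset.mem_univ u) h
  have split : (∑ u : V, ∑ v : V, if u ≠ v ∧ A u ∧ A v then (1:ℕ) else 0)
        + (∑ u : V, ∑ v : V, if u = v ∧ A u ∧ A v then (1:ℕ) else 0)
      = ∑ u : V, ∑ v : V, if A u ∧ A v then (1:ℕ) else 0 := by
    rw [← Finset.sum_add_distrib]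
    refine Finset.sum_congr rfl fun u _ => ?_
    rw [← Finset.sum_add_distrib]
    refine Finset.sum_congr rfl fun v _ => ?_
    by_cases h1 : u = v <;> by_cases h2 : A u <;> by_cases h3 : A v <;> simp [h1, h2, h3]
  have sq : (∑ u : V, ∑ v : V, if A u ∧ A v then (1:ℕ) else 0)
      = G.degree w * G.degree w := by
    have perU : ∀ u : V, (∑ v : V, if A u ∧ A v then (1:ℕ) else 0)
        = if A u then G.degree w else 0 := by
      intro u
      by_cases h : A u
      · rw [if_pos h, ← degree_filter, Finset.card_filter]
        exact Finset.sum_congr rfl fun v _ => by simp [h]; rfl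
      · rw [if_neg h]
        exact Finset.sum_eq_zero fun v _ => by simp [h]
    simp only [perU]
    rw [sum_ite_const, degree_filter]
  rw [← sq, ← split, diag, sum_ite_const, degree_filter, one_mul]

lemma sum_ite_const2 {α : Type*} (s : Finset α) (p : α → Prop) [DecidablePred p] (C : ℕ) :
    (∑ x ∈ s, if p x then C else 0) = C * (s.filter p).card := by
  rw [Finset.card_filter, Finset.mul_sum]
  exact Finset.sum_congr rfl fun x _ => by split <;> simp

lemma hcount_pair (r : ℕ) (hr : 2 ≤ r) (u v : V) (huv : u ≠ v) :
    ((Finset.powersetCard r (univ : Finset V)).filter (fun X => u ∈ X ∧ v ∈ X)).card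
      = (Fintype.card V - 2).choose (r - 2) := by
  rw [Finset.filter_congr (q := fun X => ({u, v} : Finset V) ⊆ X)
    (fun X _ => by simp [Finset.insert_subset_iff]),
    card_supersets {u, v} r (by rw [Finset.card_pair huv]; exact hr), Finset.card_pair huv]

lemma hcount_triple (w u v : V) (hwu : w ≠ u) (hwv : w ≠ v) (huv : u ≠ v) :
    ((Finset.powersetCard 3 (univ : Finset V)).filter
      (fun X => w ∈ X ∧ u ∈ X ∧ v ∈ X)).card = 1 := by
  have hc : ({w, u, v} : Finset V).card = 3 := by
    rw [Finset.card_insert_of_notMem (by simp [hwu, hwv]), Finset.card_pair huv]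
  rw [Finset.filter_congr (q := fun X => ({w, u, v} : Finset V) ⊆ X)
    (fun X _ => by simp [Finset.insert_subset_iff]),
    card_supersets {w, u, v} 3 (by rw [hc]), hc]
  simp

lemma master1 (G : SimpleGraph V) : qij G 1 1 = Fintype.card V := by
  rw [qij_eq, Finset.filter_true_of_mem
    (fun X hX => perX1 (Finset.mem_powersetCard_univ.mp hX)),
    Finset.card_powersetCard, Finset.card_univ, Nat.choose_one_right]

lemma master2 (G : SimpleGraph V) [DecidableRel G.Adj] :
    ∑ v, G.degree v = 2 * qij G 2 1 := by
  have h1 := sum_aQ G 2 le_rfl (hcount_pair 2 le_rfl)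
  simp only [Nat.sub_self, Nat.choose_zero_right, mul_one] at h1
  rw [← h1]
  have h2 : ∀ X ∈ Finset.powersetCard 2 (univ : Finset V),
      aQ G X = if ncompQ G X = 1 then 2 else 0 :=
    fun X hX => perX2 (Finset.mem_powersetCard_univ.mp hX)
  rw [Finset.sum_congr rfl h2, sum_ite_const2, ← qij_eq]

lemma master3 (G : SimpleGraph V) [DecidableRel G.Adj] :
    (∑ w, G.degree w * G.degree w) + 6 * qij G 3 1 + 4 * qij G 3 2
      = 2 * ((∑ v, G.degree v) * (Fintype.card V - 2)) + ∑ v, G.degree v := by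
  have hsum : ∑ X ∈ Finset.powersetCard 3 (univ : Finset V),
      (fQ G X + ((if ncompQ G X = 1 then 6 else 0) + (if ncompQ G X = 2 then 4 else 0)))
      = ∑ X ∈ Finset.powersetCard 3 (univ : Finset V), 2 * aQ G X :=
    Finset.sum_congr rfl fun X hX => perX3 (Finset.mem_powersetCard_univ.mp hX)
  rw [Finset.sum_add_distrib, Finset.sum_add_distrib, sum_ite_const2, sum_ite_const2,
    ← qij_eq, ← qij_eq, ← Finset.mul_sum,
    sum_aQ G 3 (by norm_num) (hcount_pair 3 (by norm_num))] at hsum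
  have hf := sum_fQ G hcount_triple
  have hch : (3 : ℕ) - 2 = 1 := rfl
  rw [hch, Nat.choose_one_right] at hsum
  omega


theorem final {V W : Type*} [Fintype V] [Fintype W]
    (G : SimpleGraph V) (H : SimpleGraph W)
    [DecidableRel G.Adj] [DecidableRel H.Adj] (k : ℕ)
    (hreg : G.IsRegularOfDegree k) (hQ : ∀ i j, qij G i j = qij H i j) :
    H.IsRegularOfDegree k := by
  classical
  set n := Fintype.card V with hn
  have hnW : Fintype.card W = n := by
    rw [← master1 H, ← hQ 1 1, master1 G]
  have hD1G : ∑ v, G.degree v = n * k := by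
    rw [Finset.sum_congr rfl fun v _ => hreg v, Finset.sum_const, Finset.card_univ, smul_eq_mul]
  have hD1H : ∑ w, H.degree w = n * k := by
    rw [master2 H, ← hQ 2 1, ← master2 G, hD1G]
  have hD2G : ∑ v, G.degree v * G.degree v = n * (k * k) := by
    rw [Finset.sum_congr rfl fun v _ => by rw [hreg v], Finset.sum_const, Finset.card_univ,
      smul_eq_mul]
  have h3G := master3 G
  have h3H := master3 H
  rw [hQ 3 1, hQ 3 2, hD1G, hD2G] at h3G
  rw [hnW, hD1H] at h3H
  rw [← hn] at h3G
  have hD2H : ∑ w, H.degree w * H.degree w = n * (k * k) := by omega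
  -- variance argument over ℤ
  have hzero : ∑ w : W, ((H.degree w : ℤ) - k) ^ 2 = 0 := by
    have expand : ∀ w : W, ((H.degree w : ℤ) - k) ^ 2
        = (H.degree w : ℤ) * (H.degree w) - 2 * k * (H.degree w) + k * k := fun w => by ring
    rw [Finset.sum_congr rfl fun w _ => expand w, Finset.sum_add_distrib,
      Finset.sum_sub_distrib, Finset.sum_const, Finset.card_univ, hnW]
    have c1 : ∑ w : W, (H.degree w : ℤ) * (H.degree w) = (n : ℤ) * (k * k) := by
      have h := congrArg (fun m : ℕ => (m : ℤ)) hD2H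
      push_cast at h
      exact h
    have c2 : ∑ w : W, 2 * (k : ℤ) * (H.degree w) = 2 * (k : ℤ) * ((n : ℤ) * k) := by
      rw [← Finset.mul_sum]
      congr 1
      have h := congrArg (fun m : ℕ => (m : ℤ)) hD1H
      push_cast at h
      exact h
    rw [c1, c2, nsmul_eq_mul]
    push_cast
    ring
  intro w
  have hw : ((H.degree w : ℤ) - k) ^ 2 = 0 := by
    have hnonneg : ∀ x ∈ (univ : Finset W), (0:ℤ) ≤ ((H.degree x : ℤ) - k) ^ 2 :=
      fun x _ => sq_nonneg _
    have := (Finset.sum_eq_zero_iff_of_nonneg hnonneg).mp hzero w (Finset.mem_univ w)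
    exact this
  have : (H.degree w : ℤ) = k := by
    have := pow_eq_zero_iff (n := 2) (by norm_num) |>.mp hw
    linarith [this]
  exact_mod_cast this

end QAux

theorem regularity_determined_by_Q
    {V W : Type*} [Fintype V] [Fintype W]
    (G : SimpleGraph V) (H : SimpleGraph W)
    [DecidableRel G.Adj] [DecidableRel H.Adj] (k : ℕ)
    (hreg : G.IsRegularOfDegree k) (hQ : QEquiv G H) :
    H.IsRegularOfDegree k :=
  final G H k hreg hQ
end

section
/- Let G be a k-regular bipartite finite simple graph with k ≥ 1. Let p be the number of 4-element vertex subsets of G whose induced subgraph is isomorphic to the path P_4, and let c be the number of 4-element vertex subsets whose induced subgraph is isomorphic to the cycle C_4. Then (2k − 2)·q_{3,1}(G) = 2p + 8c, where q_{3,1}(G) is the number of 3-element vertex subsets inducing a connected subgraph. -/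
open SimpleGraph

/-- The number of 4-element vertex subsets whose induced subgraph is isomorphic to
the path `P₄`. -/
noncomputable def numP4 {V : Type*} [Fintype V] (G : SimpleGraph V) : ℕ :=
  Nat.card {X : Finset V // X.card = 4 ∧
    Nonempty (G.induce (X : Set V) ≃g pathGraph 4)}

/-- The number of 4-element vertex subsets whose induced subgraph is isomorphic to
the cycle `C₄`. -/
noncomputable def numC4 {V : Type*} [Fintype V] (G : SimpleGraph V) : ℕ :=
  Nat.card {X : Finset V // X.card = 4 ∧
    Nonempty (G.induce (X : Set V) ≃g cycleGraph 4)}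

lemma aux_card_cc_one {α : Type*} (H : SimpleGraph α) :
    Nat.card H.ConnectedComponent = 1 ↔ H.Connected := by
  rw [Nat.card_eq_one_iff_unique, connected_iff]
  constructor
  · rintro ⟨hs, ⟨c⟩⟩
    obtain ⟨v, -⟩ := c.exists_rep
    refine ⟨fun u w => ?_, ⟨v⟩⟩
    exact (ConnectedComponent.eq).mp
      (Subsingleton.elim (H.connectedComponentMk u) (H.connectedComponentMk w))
  · rintro ⟨hp, ⟨v⟩⟩
    refine ⟨⟨fun a b => ?_⟩, ⟨H.connectedComponentMk v⟩⟩
    obtain ⟨x, rfl⟩ := a.exists_rep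
    obtain ⟨y, rfl⟩ := b.exists_rep
    exact ConnectedComponent.eq.mpr (hp x y)

lemma aux_exists_adj {α : Type*} {H : SimpleGraph α} (hc : H.Preconnected)
    {u v : α} (h : u ≠ v) : ∃ t, H.Adj u t := by
  obtain ⟨w⟩ := hc u v
  cases w with
  | nil => exact absurd rfl h
  | cons hadj _ => exact ⟨_, hadj⟩

lemma fin2_eq {i j k : Fin 2} (h : i ≠ k) (h' : j ≠ k) : i = j := by
  revert h h'; fin_cases i <;> fin_cases j <;> fin_cases k <;> decide

lemma aux_tf {V : Type*} {G : SimpleGraph V} (hbip : G.Colorable 2) :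
    ∀ x y z, G.Adj x y → G.Adj y z → G.Adj x z → False := by
  obtain ⟨c⟩ := hbip
  intro x y z h1 h2 h3
  exact (c.valid h3) (fin2_eq (c.valid h1) (Ne.symm (c.valid h2)))

lemma aux_reach {V : Type*} {G : SimpleGraph V} {s : Set V} {p q : s}
    (h : G.Adj p q) : (G.induce s).Reachable p q :=
  (SimpleGraph.Adj.reachable (by simpa using h))

lemma aux_conn_of_center {V : Type*} [DecidableEq V] {G : SimpleGraph V} {v a b : V}
    (h1 : G.Adj v a) (h2 : G.Adj v b) :
    (G.induce (({v, a, b} : Finset V) : Set V)).Connected := by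
  have hv : v ∈ (({v, a, b} : Finset V) : Set V) := by simp
  rw [connected_iff]
  refine ⟨fun x y => ?_, ⟨⟨v, hv⟩⟩⟩
  have key : ∀ x : (({v, a, b} : Finset V) : Set V),
      (G.induce _).Reachable x ⟨v, hv⟩ := by
    rintro ⟨x, hx⟩
    simp only [Finset.coe_insert, Finset.coe_singleton, Set.mem_insert_iff,
      Set.mem_singleton_iff] at hx
    rcases hx with rfl | rfl | rfl
    · rfl
    · exact aux_reach (G := G) h1.symm
    · exact aux_reach (G := G) h2.symm
  exact (key x).trans (key y).symm

lemma aux_three {V : Type*} [DecidableEq V] {G : SimpleGraph V}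
    (X : Finset V) (h3 : X.card = 3) (hc : (G.induce (X : Set V)).Connected) :
    ∃ v a b, a ≠ b ∧ G.Adj v a ∧ G.Adj v b ∧ X = {v, a, b} := by
  obtain ⟨x, y, z, hxy, hxz, hyz, rfl⟩ := Finset.card_eq_three.mp h3
  have hadj : ∀ p q : V, p ∈ ({x,y,z} : Finset V) → p ≠ q → q ∈ ({x,y,z} : Finset V) →
      ∃ r, r ∈ ({x,y,z} : Finset V) ∧ r ≠ p ∧ G.Adj p r := by
    intro p q hp hpq hq
    obtain ⟨t, ht⟩ := aux_exists_adj hc.preconnected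
      (u := ⟨p, by simpa using hp⟩) (v := ⟨q, by simpa using hq⟩)
      (by simp [Subtype.ext_iff, hpq])
    have ht' : G.Adj p t.val := by simpa using ht
    exact ⟨t.val, by simpa using t.property, ht'.ne', ht'⟩
  have hxm : x ∈ ({x,y,z} : Finset V) := by simp
  have hym : y ∈ ({x,y,z} : Finset V) := by simp
  have hzm : z ∈ ({x,y,z} : Finset V) := by simp
  obtain ⟨r, hr, hrx, hxr⟩ := hadj x y hxm hxy hym
  have hr' : r = y ∨ r = z := by
    rcases Finset.mem_insert.mp hr with h | h
    · exact absurd h hrx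
    · simpa using h
  rcases hr' with h | h <;> rw [h] at hxr hrx
  · -- x ~ y
    obtain ⟨s, hs, hsz, hzs⟩ := hadj z x hzm (Ne.symm hxz) hxm
    have hs' : s = x ∨ s = y := by
      rcases Finset.mem_insert.mp hs with h | h
      · left; exact h
      · rcases Finset.mem_insert.mp h with h | h
        · right; exact h
        · exact absurd (Finset.mem_singleton.mp h) hsz
    rcases hs' with h | h <;> rw [h] at hzs hsz
    · exact ⟨x, y, z, hyz, hxr, hzs.symm, rfl⟩
    · exact ⟨y, x, z, hxz, hxr.symm, hzs.symm, by ext w; simp; tauto⟩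
  · -- x ~ z
    obtain ⟨s, hs, hsy, hys⟩ := hadj y x hym (Ne.symm hxy) hxm
    have hs' : s = x ∨ s = z := by
      rcases Finset.mem_insert.mp hs with h | h
      · left; exact h
      · rcases Finset.mem_insert.mp h with h | h
        · exact absurd h hsy
        · right; exact Finset.mem_singleton.mp h
    rcases hs' with h | h <;> rw [h] at hys hsy
    · exact ⟨x, y, z, hyz, hys.symm, hxr, rfl⟩
    · exact ⟨z, x, y, hxy, hxr.symm, hys.symm, by ext w; simp; tauto⟩

lemma aux_three_fiber {V : Type*} [DecidableEq V] {G : SimpleGraph V}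
    (htf : ∀ x y z, G.Adj x y → G.Adj y z → G.Adj x z → False)
    {v a b v' a' b' : V}
    (h1 : G.Adj v a) (h2 : G.Adj v b) (hab : a ≠ b)
    (h1' : G.Adj v' a') (h2' : G.Adj v' b') (hab' : a' ≠ b')
    (hX : ({v', a', b'} : Finset V) = {v, a, b}) :
    v' = v ∧ ((a' = a ∧ b' = b) ∨ (a' = b ∧ b' = a)) := by
  have hnab : ¬ G.Adj a b := fun h => htf v a b h1 h h2
  have hnba : ¬ G.Adj b a := fun h => hnab h.symm
  have hmem : ∀ w, w ∈ ({v', a', b'} : Finset V) → w = v ∨ w = a ∨ w = b := by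
    intro w hw; rw [hX] at hw; simpa using hw
  have hv' := hmem v' (by simp)
  have ha' := hmem a' (by simp)
  have hb' := hmem b' (by simp)
  rcases hv' with h | h | h
  · refine ⟨h, ?_⟩
    rw [h] at h1' h2'
    have ha2 : a' = a ∨ a' = b := by
      rcases ha' with h' | h' | h'
      · exact absurd (h' ▸ h1') (G.irrefl)
      · exact Or.inl h'
      · exact Or.inr h'
    have hb2 : b' = a ∨ b' = b := by
      rcases hb' with h' | h' | h'
      · exact absurd (h' ▸ h2') (G.irrefl)
      · exact Or.inl h'
      · exact Or.inr h'
    rcases ha2 with h' | h' <;> rcases hb2 with h'' | h''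
    · exact absurd (h'.trans h''.symm) hab'
    · exact Or.inl ⟨h', h''⟩
    · exact Or.inr ⟨h', h''⟩
    · exact absurd (h'.trans h''.symm) hab'
  · -- v' = a : contradiction
    rw [h] at h1' h2'
    exfalso
    rcases ha' with h' | h' | h'
    · -- a' = v
      rcases hb' with h'' | h'' | h''
      · exact hab' (by rw [h', h''])
      · exact G.irrefl (h'' ▸ h2')
      · exact hnab (h'' ▸ h2')
    · exact G.irrefl (h' ▸ h1')
    · exact hnab (h' ▸ h1')
  · -- v' = b : contradiction
    rw [h] at h1' h2'
    exfalso
    rcases ha' with h' | h' | h'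
    · rcases hb' with h'' | h'' | h''
      · exact hab' (by rw [h', h''])
      · exact hnba (h'' ▸ h2')
      · exact G.irrefl (h'' ▸ h2')
    · exact hnba (h' ▸ h1')
    · exact G.irrefl (h' ▸ h1')

lemma aux_induce_adj {V : Type*} {G : SimpleGraph V} {s : Set V} {p q : s} :
    (G.induce s).Adj p q ↔ G.Adj p.val q.val := by
  simp [comap_adj]

lemma aux_iso_of_tuple {V : Type*} [DecidableEq V] {G : SimpleGraph V}
    {H : SimpleGraph (Fin 4)} (x : Fin 4 → V) (hinj : Function.Injective x)
    (hadj : ∀ i j, H.Adj i j → G.Adj (x i) (x j))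
    (hnadj : ∀ i j, i ≠ j → ¬H.Adj i j → ¬G.Adj (x i) (x j)) :
    Nonempty (G.induce (({x 0, x 1, x 2, x 3} : Finset V) : Set V) ≃g H) := by
  set X : Finset V := {x 0, x 1, x 2, x 3} with hXdef
  have hmem : ∀ i, x i ∈ (X : Set V) := by
    intro i; fin_cases i <;> simp [hXdef]
  let e : Fin 4 → (X : Set V) := fun i => ⟨x i, hmem i⟩
  have hbij : Function.Bijective e := by
    constructor
    · intro i j hij
      exact hinj (congrArg Subtype.val hij)
    · rintro ⟨p, hp⟩
      simp only [hXdef, Finset.coe_insert, Finset.coe_singleton, Set.mem_insert_iff,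
        Set.mem_singleton_iff] at hp
      rcases hp with h | h | h | h
      · exact ⟨0, by simp [e, h]⟩
      · exact ⟨1, by simp [e, h]⟩
      · exact ⟨2, by simp [e, h]⟩
      · exact ⟨3, by simp [e, h]⟩
  have hiff : ∀ i j, (G.induce (X : Set V)).Adj (e i) (e j) ↔ H.Adj i j := by
    intro i j
    rw [aux_induce_adj]
    show G.Adj (x i) (x j) ↔ H.Adj i j
    constructor
    · intro h
      by_contra hH
      have hij : i ≠ j := fun hh => G.irrefl (hh ▸ h)
      exact hnadj i j hij hH h
    · exact hadj i j
  exact ⟨(RelIso.mk (Equiv.ofBijective e hbij) (hiff _ _)).symm⟩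

lemma aux_iso_extract {V : Type*} [DecidableEq V] {G : SimpleGraph V} {X : Finset V}
    (h4 : X.card = 4) {H : SimpleGraph (Fin 4)} (φ : G.induce (X : Set V) ≃g H) :
    ∃ x : Fin 4 → V, Function.Injective x ∧ X = {x 0, x 1, x 2, x 3} ∧
      ∀ i j, G.Adj (x i) (x j) ↔ H.Adj i j := by
  set x : Fin 4 → V := fun i => (φ.symm i : V) with hxdef
  have hinj : Function.Injective x := fun i j h => φ.symm.injective (Subtype.ext h)
  refine ⟨x, hinj, ?_, ?_⟩
  · have hsub : ({x 0, x 1, x 2, x 3} : Finset V) ⊆ X := by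
      intro p hp
      simp only [Finset.mem_insert, Finset.mem_singleton] at hp
      rcases hp with h | h | h | h <;>
        exact h ▸ Finset.mem_coe.mp (φ.symm _).property
    have h01 : x 0 ≠ x 1 := fun h => by simpa using hinj h
    have h02 : x 0 ≠ x 2 := fun h => by simpa using hinj h
    have h03 : x 0 ≠ x 3 := fun h => by simpa using hinj h
    have h12 : x 1 ≠ x 2 := fun h => by simpa using hinj h
    have h13 : x 1 ≠ x 3 := fun h => by simpa using hinj h
    have h23 : x 2 ≠ x 3 := fun h => by simpa using hinj h
    have hcard : ({x 0, x 1, x 2, x 3} : Finset V).card = 4 := by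
      rw [Finset.card_insert_of_notMem (by simp [h01, h02, h03]),
        Finset.card_insert_of_notMem (by simp [h12, h13]),
        Finset.card_insert_of_notMem (by simp [h23]), Finset.card_singleton]
    exact (Finset.eq_of_subset_of_card_le hsub (by rw [hcard, h4])).symm
  · intro i j
    rw [← φ.symm.map_adj_iff, aux_induce_adj]





set_option maxHeartbeats 2000000 in
lemma aux_p4_fiber {V : Type*} [DecidableEq V] {G : SimpleGraph V} {X : Finset V}
    (x : Fin 4 → V) (hinj : Function.Injective x) (hX : X = {x 0, x 1, x 2, x 3})
    (hx : ∀ i j, G.Adj (x i) (x j) ↔ (pathGraph 4).Adj i j)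
    {v a b w : V} (h1 : G.Adj v a) (h2 : G.Adj v b) (hab : a ≠ b)
    (h3 : G.Adj a w) (hwv : w ≠ v) (hnbw : ¬G.Adj b w)
    (hset : ({v, a, b, w} : Finset V) = X) :
    (v = x 1 ∧ a = x 2 ∧ b = x 0 ∧ w = x 3) ∨
    (v = x 2 ∧ a = x 1 ∧ b = x 3 ∧ w = x 0) := by
  have hne : ∀ i j : Fin 4, i ≠ j → x i ≠ x j := fun i j hij h => hij (hinj h)
  have h01 := hne 0 1 (by decide); have h02 := hne 0 2 (by decide)
  have h03 := hne 0 3 (by decide); have h12 := hne 1 2 (by decide)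
  have h13 := hne 1 3 (by decide); have h23 := hne 2 3 (by decide)
  have h10 := hne 1 0 (by decide); have h20 := hne 2 0 (by decide)
  have h30 := hne 3 0 (by decide); have h21 := hne 2 1 (by decide)
  have h31 := hne 3 1 (by decide); have h32 := hne 3 2 (by decide)
  have a01 : G.Adj (x 0) (x 1) := (hx 0 1).mpr (by rw [pathGraph_adj]; decide)
  have a12 : G.Adj (x 1) (x 2) := (hx 1 2).mpr (by rw [pathGraph_adj]; decide)
  have a23 : G.Adj (x 2) (x 3) := (hx 2 3).mpr (by rw [pathGraph_adj]; decide)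
  have a10 := a01.symm; have a21 := a12.symm; have a32 := a23.symm
  have npath : ∀ i j, ¬(pathGraph 4).Adj i j → ¬ G.Adj (x i) (x j) :=
    fun i j h hg => h ((hx i j).mp hg)
  have n02 := npath 0 2 (by rw [pathGraph_adj]; decide)
  have n20 := npath 2 0 (by rw [pathGraph_adj]; decide)
  have n03 := npath 0 3 (by rw [pathGraph_adj]; decide)
  have n30 := npath 3 0 (by rw [pathGraph_adj]; decide)
  have n13 := npath 1 3 (by rw [pathGraph_adj]; decide)
  have n31 := npath 3 1 (by rw [pathGraph_adj]; decide)
  have n00 := npath 0 0 (by rw [pathGraph_adj]; decide)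
  have n11 := npath 1 1 (by rw [pathGraph_adj]; decide)
  have n22 := npath 2 2 (by rw [pathGraph_adj]; decide)
  have n33 := npath 3 3 (by rw [pathGraph_adj]; decide)
  have hmem : ∀ p : V, p ∈ ({v, a, b, w} : Finset V) →
      p = x 0 ∨ p = x 1 ∨ p = x 2 ∨ p = x 3 := by
    intro p hp; rw [hset, hX] at hp; simpa using hp
  have hv := hmem v (by simp); have ha := hmem a (by simp)
  have hb := hmem b (by simp); have hw := hmem w (by simp)
  clear hmem hset hx npath hne hinj hX
  rcases hv with rfl | rfl | rfl | rfl <;> rcases ha with rfl | rfl | rfl | rfl <;>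
    rcases hb with rfl | rfl | rfl | rfl <;> rcases hw with rfl | rfl | rfl | rfl <;>
    simp_all

set_option maxHeartbeats 2000000 in
lemma aux_c4_fiber {V : Type*} [DecidableEq V] {G : SimpleGraph V} {X : Finset V}
    (x : Fin 4 → V) (hinj : Function.Injective x) (hX : X = {x 0, x 1, x 2, x 3})
    (hx : ∀ i j, G.Adj (x i) (x j) ↔ (cycleGraph 4).Adj i j)
    {v a b w : V} (h1 : G.Adj v a) (h2 : G.Adj v b) (hab : a ≠ b)
    (h3 : G.Adj a w) (hwv : w ≠ v) (hbw : G.Adj b w)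
    (hset : ({v, a, b, w} : Finset V) = X) :
    (v = x 0 ∧ a = x 1 ∧ b = x 3 ∧ w = x 2) ∨
    (v = x 0 ∧ a = x 3 ∧ b = x 1 ∧ w = x 2) ∨
    (v = x 1 ∧ a = x 0 ∧ b = x 2 ∧ w = x 3) ∨
    (v = x 1 ∧ a = x 2 ∧ b = x 0 ∧ w = x 3) ∨
    (v = x 2 ∧ a = x 1 ∧ b = x 3 ∧ w = x 0) ∨
    (v = x 2 ∧ a = x 3 ∧ b = x 1 ∧ w = x 0) ∨
    (v = x 3 ∧ a = x 0 ∧ b = x 2 ∧ w = x 1) ∨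
    (v = x 3 ∧ a = x 2 ∧ b = x 0 ∧ w = x 1) := by
  have hne : ∀ i j : Fin 4, i ≠ j → x i ≠ x j := fun i j hij h => hij (hinj h)
  have h01 := hne 0 1 (by decide); have h02 := hne 0 2 (by decide)
  have h03 := hne 0 3 (by decide); have h12 := hne 1 2 (by decide)
  have h13 := hne 1 3 (by decide); have h23 := hne 2 3 (by decide)
  have h10 := hne 1 0 (by decide); have h20 := hne 2 0 (by decide)
  have h30 := hne 3 0 (by decide); have h21 := hne 2 1 (by decide)
  have h31 := hne 3 1 (by decide); have h32 := hne 3 2 (by decide)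
  have a01 : G.Adj (x 0) (x 1) := (hx 0 1).mpr (by rw [cycleGraph_adj]; decide)
  have a12 : G.Adj (x 1) (x 2) := (hx 1 2).mpr (by rw [cycleGraph_adj]; decide)
  have a23 : G.Adj (x 2) (x 3) := (hx 2 3).mpr (by rw [cycleGraph_adj]; decide)
  have a30 : G.Adj (x 3) (x 0) := (hx 3 0).mpr (by rw [cycleGraph_adj]; decide)
  have a10 := a01.symm; have a21 := a12.symm; have a32 := a23.symm
  have a03 := a30.symm
  have ncyc : ∀ i j, ¬(cycleGraph 4).Adj i j → ¬ G.Adj (x i) (x j) :=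
    fun i j h hg => h ((hx i j).mp hg)
  have n02 := ncyc 0 2 (by rw [cycleGraph_adj]; decide)
  have n20 := ncyc 2 0 (by rw [cycleGraph_adj]; decide)
  have n13 := ncyc 1 3 (by rw [cycleGraph_adj]; decide)
  have n31 := ncyc 3 1 (by rw [cycleGraph_adj]; decide)
  have n00 := ncyc 0 0 (by rw [cycleGraph_adj]; decide)
  have n11 := ncyc 1 1 (by rw [cycleGraph_adj]; decide)
  have n22 := ncyc 2 2 (by rw [cycleGraph_adj]; decide)
  have n33 := ncyc 3 3 (by rw [cycleGraph_adj]; decide)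
  have hmem : ∀ p : V, p ∈ ({v, a, b, w} : Finset V) →
      p = x 0 ∨ p = x 1 ∨ p = x 2 ∨ p = x 3 := by
    intro p hp; rw [hset, hX] at hp; simpa using hp
  have hv := hmem v (by simp); have ha := hmem a (by simp)
  have hb := hmem b (by simp); have hw := hmem w (by simp)
  clear hmem hset hx ncyc hne hinj hX
  rcases hv with rfl | rfl | rfl | rfl <;> rcases ha with rfl | rfl | rfl | rfl <;>
    rcases hb with rfl | rfl | rfl | rfl <;> rcases hw with rfl | rfl | rfl | rfl <;>
    simp_all

lemma card3 {V : Type*} [DecidableEq V] {a b c : V} (hab : a ≠ b) (hac : a ≠ c)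
    (hbc : b ≠ c) : ({a, b, c} : Finset V).card = 3 := by
  rw [Finset.card_insert_of_notMem (by simp [hab, hac]),
    Finset.card_insert_of_notMem (by simp [hbc]), Finset.card_singleton]

lemma card4 {V : Type*} [DecidableEq V] {a b c d : V} (hab : a ≠ b) (hac : a ≠ c)
    (had : a ≠ d) (hbc : b ≠ c) (hbd : b ≠ d) (hcd : c ≠ d) :
    ({a, b, c, d} : Finset V).card = 4 := by
  rw [Finset.card_insert_of_notMem (by simp [hab, hac, had]),
    Finset.card_insert_of_notMem (by simp [hbc, hbd]),
    Finset.card_insert_of_notMem (by simp [hcd]), Finset.card_singleton]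

set_option maxHeartbeats 4000000 in
theorem q31_of_regular_bipartite
    {V : Type*} [Fintype V] (G : SimpleGraph V) [DecidableRel G.Adj] (k : ℕ)
    (hk : 1 ≤ k)
    (hreg : G.IsRegularOfDegree k) (hbip : G.Colorable 2) :
    (2 * k - 2) * qij G 3 1 = 2 * numP4 G + 8 * numC4 G := by
  classical
  have htf := aux_tf hbip
  set Q3 : Finset (Finset V) := Finset.univ.filter (fun X : Finset V => X.card = 3 ∧
    Nat.card ((G.induce (X : Set V)).ConnectedComponent) = 1) with hQ3def
  set Q4P : Finset (Finset V) := Finset.univ.filter (fun X : Finset V => X.card = 4 ∧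
    Nonempty (G.induce (X : Set V) ≃g pathGraph 4)) with hQ4Pdef
  set Q4C : Finset (Finset V) := Finset.univ.filter (fun X : Finset V => X.card = 4 ∧
    Nonempty (G.induce (X : Set V) ≃g cycleGraph 4)) with hQ4Cdef
  have hq3 : qij G 3 1 = Q3.card := by
    rw [qij, Nat.card_eq_fintype_card, Fintype.card_subtype, hQ3def]
  have hp4 : numP4 G = Q4P.card := by
    rw [numP4, Nat.card_eq_fintype_card, Fintype.card_subtype, hQ4Pdef]
  have hc4 : numC4 G = Q4C.card := by
    rw [numC4, Nat.card_eq_fintype_card, Fintype.card_subtype, hQ4Cdef]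
  set P3 : Finset (V × V × V) := Finset.univ.filter
    (fun t => G.Adj t.1 t.2.1 ∧ G.Adj t.1 t.2.2 ∧ t.2.1 ≠ t.2.2) with hP3def
  set T : Finset (V × V × V × V) := Finset.univ.filter
    (fun t => G.Adj t.1 t.2.1 ∧ G.Adj t.1 t.2.2.1 ∧ t.2.1 ≠ t.2.2.1 ∧
      G.Adj t.2.1 t.2.2.2 ∧ t.2.2.2 ≠ t.1) with hTdef
  -- Step 1 : P3.card = 2 * Q3.card
  have hP3card : P3.card = 2 * Q3.card := by
    have hmap : ∀ t ∈ P3, ({t.1, t.2.1, t.2.2} : Finset V) ∈ Q3 := by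
      rintro ⟨v, a, b⟩ ht
      rw [hP3def, Finset.mem_filter] at ht
      obtain ⟨-, h1, h2, hab⟩ := ht
      rw [hQ3def, Finset.mem_filter]
      exact ⟨Finset.mem_univ _, card3 h1.ne h2.ne hab,
        (aux_card_cc_one _).mpr (aux_conn_of_center h1 h2)⟩
    rw [Finset.card_eq_sum_card_fiberwise hmap]
    have hfib : ∀ X ∈ Q3,
        (P3.filter (fun t => ({t.1, t.2.1, t.2.2} : Finset V) = X)).card = 2 := by
      intro X hX
      rw [hQ3def, Finset.mem_filter] at hX
      obtain ⟨-, h3, hconn⟩ := hX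
      obtain ⟨v, a, b, hab, h1, h2, hXeq⟩ := aux_three X h3 ((aux_card_cc_one _).mp hconn)
      have hfibeq : P3.filter (fun t => ({t.1, t.2.1, t.2.2} : Finset V) = X) =
          {(v, a, b), (v, b, a)} := by
        ext ⟨v', a', b'⟩
        simp only [Finset.mem_filter, hP3def, Finset.mem_univ, true_and,
          Finset.mem_insert, Finset.mem_singleton, Prod.mk.injEq]
        constructor
        · rintro ⟨⟨h1', h2', hab'⟩, hset⟩
          obtain ⟨hv, hrest⟩ := aux_three_fiber htf h1 h2 hab h1' h2' hab'
            (by rw [hset, hXeq])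
          rcases hrest with ⟨ha, hb⟩ | ⟨ha, hb⟩
          · exact Or.inl ⟨hv, ha, hb⟩
          · exact Or.inr ⟨hv, ha, hb⟩
        · rintro (⟨rfl, rfl, rfl⟩ | ⟨rfl, rfl, rfl⟩)
          · exact ⟨⟨h1, h2, hab⟩, hXeq.symm⟩
          · refine ⟨⟨h2, h1, hab.symm⟩, ?_⟩
            rw [hXeq]; ext u; simp; tauto
      rw [hfibeq, Finset.card_insert_of_notMem, Finset.card_singleton]
      simp only [Finset.mem_singleton, Prod.mk.injEq, not_and]
      intro _ h _
      exact hab h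
    rw [Finset.sum_congr rfl hfib, Finset.sum_const, smul_eq_mul, mul_comm]
  -- Step 2 : T.card = P3.card * (k - 1)
  have hTcard : T.card = P3.card * (k - 1) := by
    have hmap : ∀ t ∈ T, (t.1, t.2.1, t.2.2.1) ∈ P3 := by
      rintro ⟨v, a, b, w⟩ ht
      rw [hTdef, Finset.mem_filter] at ht
      obtain ⟨-, h1, h2, hab, -, -⟩ := ht
      rw [hP3def, Finset.mem_filter]
      exact ⟨Finset.mem_univ _, h1, h2, hab⟩
    rw [Finset.card_eq_sum_card_fiberwise hmap]
    have hfib : ∀ t0 ∈ P3,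
        (T.filter (fun t => (t.1, t.2.1, t.2.2.1) = t0)).card = k - 1 := by
      rintro ⟨v, a, b⟩ ht0
      rw [hP3def, Finset.mem_filter] at ht0
      obtain ⟨-, h1, h2, hab⟩ := ht0
      have himg : T.filter (fun t => (t.1, t.2.1, t.2.2.1) = (v, a, b)) =
          ((G.neighborFinset a).erase v).image (fun u => (v, a, b, u)) := by
        ext ⟨v', a', b', w⟩
        simp only [Finset.mem_filter, Finset.mem_image, Finset.mem_erase,
          SimpleGraph.mem_neighborFinset, hTdef, Finset.mem_univ, true_and, Prod.mk.injEq]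
        constructor
        · rintro ⟨⟨c1, c2, c3, c4, c5⟩, rfl, rfl, rfl⟩
          exact ⟨w, ⟨c5, c4⟩, rfl, rfl, rfl, rfl⟩
        · rintro ⟨u, ⟨hu1, hu2⟩, rfl, rfl, rfl, rfl⟩
          exact ⟨⟨h1, h2, hab, hu2, hu1⟩, rfl, rfl, rfl⟩
      rw [himg, Finset.card_image_of_injective _ (fun u u' h => congrArg (fun t => t.2.2.2) h),
        Finset.card_erase_of_mem (by rw [SimpleGraph.mem_neighborFinset]; exact h1.symm)]
      exact congrArg (fun n => n - 1) (hreg a)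
    rw [Finset.sum_congr rfl hfib, Finset.sum_const, smul_eq_mul]
  -- Step 3 : split T
  have hsplit : (T.filter (fun t => ¬ G.Adj t.2.2.1 t.2.2.2)).card +
      (T.filter (fun t => G.Adj t.2.2.1 t.2.2.2)).card = T.card := by
    rw [add_comm]
    exact Finset.card_filter_add_card_filter_not _
  -- Step 4 : path count
  have hTP : (T.filter (fun t => ¬ G.Adj t.2.2.1 t.2.2.2)).card = 2 * Q4P.card := by
    have hmap : ∀ t ∈ T.filter (fun t => ¬ G.Adj t.2.2.1 t.2.2.2),
        ({t.1, t.2.1, t.2.2.1, t.2.2.2} : Finset V) ∈ Q4P := by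
      rintro ⟨v, a, b, w⟩ ht
      rw [Finset.mem_filter, hTdef, Finset.mem_filter] at ht
      obtain ⟨⟨-, h1, h2, hab, h3, hwv⟩, hnbw⟩ := ht
      have hnab : ¬G.Adj a b := fun h => htf v a b h1 h h2
      have hnvw : ¬G.Adj v w := fun h => htf v a w h1 h3 h
      have hbwne : b ≠ w := fun h => htf v a w h1 h3 (h ▸ h2)
      rw [hQ4Pdef, Finset.mem_filter]
      refine ⟨Finset.mem_univ _,
        card4 h1.ne h2.ne (fun h => hwv h.symm) hab h3.ne hbwne, ?_⟩
      have key := aux_iso_of_tuple (G := G) (H := pathGraph 4) ![w, a, v, b]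
        ?_ ?_ ?_
      · have hsets : ({(![w, a, v, b] : Fin 4 → V) 0, ![w, a, v, b] 1,
            ![w, a, v, b] 2, ![w, a, v, b] 3} : Finset V) = ({v, a, b, w} : Finset V) := by
          simp only [Matrix.cons_val_zero, Matrix.cons_val_one, Matrix.head_cons,
            Matrix.cons_val_two, Matrix.tail_cons, Matrix.cons_val_three]
          ext u; simp; tauto
        rwa [hsets] at key
      · have hd1 := h1.ne; have hd2 := h2.ne; have hd3 := h3.ne
        intro i j h
        fin_cases i <;> fin_cases j <;> simp_all
      · have s1 := h1.symm; have s2 := h2.symm; have s3 := h3.symm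
        have n1 : ¬ G.Adj w b := fun h => hnbw h.symm
        have n2 : ¬ G.Adj w v := fun h => hnvw h.symm
        have n3 : ¬ G.Adj b a := fun h => hnab h.symm
        intro i j h
        fin_cases i <;> fin_cases j <;> rw [pathGraph_adj] at h <;>
          first
            | exact absurd h (by decide)
            | simp_all
      · have s1 := h1.symm; have s2 := h2.symm; have s3 := h3.symm
        have n1 : ¬ G.Adj w b := fun h => hnbw h.symm
        have n2 : ¬ G.Adj w v := fun h => hnvw h.symm
        have n3 : ¬ G.Adj b a := fun h => hnab h.symm
        intro i j hij hH
        fin_cases i <;> fin_cases j <;>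
          first
            | exact absurd rfl hij
            | exact absurd (by rw [pathGraph_adj]; decide) hH
            | simp_all
    rw [Finset.card_eq_sum_card_fiberwise hmap]
    have hfib : ∀ X ∈ Q4P, ((T.filter (fun t => ¬ G.Adj t.2.2.1 t.2.2.2)).filter
        (fun t => ({t.1, t.2.1, t.2.2.1, t.2.2.2} : Finset V) = X)).card = 2 := by
      intro X hX
      rw [hQ4Pdef, Finset.mem_filter] at hX
      obtain ⟨-, h4, ⟨φ⟩⟩ := hX
      obtain ⟨x, hinj, hXeq, hx⟩ := aux_iso_extract h4 φ
      have hne : ∀ i j : Fin 4, i ≠ j → x i ≠ x j := fun i j hij h => hij (hinj h)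
      have a01 : G.Adj (x 0) (x 1) := (hx 0 1).mpr (by rw [pathGraph_adj]; decide)
      have a12 : G.Adj (x 1) (x 2) := (hx 1 2).mpr (by rw [pathGraph_adj]; decide)
      have a23 : G.Adj (x 2) (x 3) := (hx 2 3).mpr (by rw [pathGraph_adj]; decide)
      have n03 : ¬ G.Adj (x 0) (x 3) :=
        fun h => (by rw [pathGraph_adj]; decide : ¬(pathGraph 4).Adj 0 3) ((hx 0 3).mp h)
      have hfibeq : (T.filter (fun t => ¬ G.Adj t.2.2.1 t.2.2.2)).filter
          (fun t => ({t.1, t.2.1, t.2.2.1, t.2.2.2} : Finset V) = X) =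
          {(x 1, x 2, x 0, x 3), (x 2, x 1, x 3, x 0)} := by
        ext ⟨v, a, b, w⟩
        simp only [Finset.mem_filter, hTdef, Finset.mem_univ, true_and,
          Finset.mem_insert, Finset.mem_singleton, Prod.mk.injEq]
        constructor
        · rintro ⟨⟨⟨h1, h2, hab, h3, hwv⟩, hnbw⟩, hset⟩
          rcases aux_p4_fiber x hinj hXeq hx h1 h2 hab h3 hwv hnbw hset with
            ⟨hv, ha, hb, hw⟩ | ⟨hv, ha, hb, hw⟩
          · exact Or.inl ⟨hv, ha, hb, hw⟩
          · exact Or.inr ⟨hv, ha, hb, hw⟩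
        · rintro (⟨rfl, rfl, rfl, rfl⟩ | ⟨rfl, rfl, rfl, rfl⟩)
          · refine ⟨⟨⟨a12, a01.symm, hne 2 0 (by decide), a23, hne 3 1 (by decide)⟩,
              n03⟩, ?_⟩
            rw [hXeq]; ext u; simp; tauto
          · refine ⟨⟨⟨a12.symm, a23, hne 1 3 (by decide), a01.symm, hne 0 2 (by decide)⟩,
              fun h => n03 h.symm⟩, ?_⟩
            rw [hXeq]; ext u; simp; tauto
      rw [hfibeq, Finset.card_insert_of_notMem, Finset.card_singleton]
      simp only [Finset.mem_singleton, Prod.mk.injEq, not_and]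
      intro h
      exact absurd h (hne 1 2 (by decide))
    rw [Finset.sum_congr rfl hfib, Finset.sum_const, smul_eq_mul, mul_comm]
  -- Step 5 : cycle count
  have hTC : (T.filter (fun t => G.Adj t.2.2.1 t.2.2.2)).card = 8 * Q4C.card := by
    have hmap : ∀ t ∈ T.filter (fun t => G.Adj t.2.2.1 t.2.2.2),
        ({t.1, t.2.1, t.2.2.1, t.2.2.2} : Finset V) ∈ Q4C := by
      rintro ⟨v, a, b, w⟩ ht
      rw [Finset.mem_filter, hTdef, Finset.mem_filter] at ht
      obtain ⟨⟨-, h1, h2, hab, h3, hwv⟩, hbw⟩ := ht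
      have hnab : ¬G.Adj a b := fun h => htf v a b h1 h h2
      have hnvw : ¬G.Adj v w := fun h => htf v a w h1 h3 h
      have hbwne : b ≠ w := fun h => htf v a w h1 h3 (h ▸ h2)
      rw [hQ4Cdef, Finset.mem_filter]
      refine ⟨Finset.mem_univ _,
        card4 h1.ne h2.ne (fun h => hwv h.symm) hab h3.ne hbwne, ?_⟩
      have key := aux_iso_of_tuple (G := G) (H := cycleGraph 4) ![v, a, w, b]
        ?_ ?_ ?_
      · have hsets : ({(![v, a, w, b] : Fin 4 → V) 0, ![v, a, w, b] 1,
            ![v, a, w, b] 2, ![v, a, w, b] 3} : Finset V) = ({v, a, b, w} : Finset V) := by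
          simp only [Matrix.cons_val_zero, Matrix.cons_val_one, Matrix.head_cons,
            Matrix.cons_val_two, Matrix.tail_cons, Matrix.cons_val_three]
          ext u; simp; tauto
        rwa [hsets] at key
      · have hd1 := h1.ne; have hd2 := h2.ne; have hd3 := h3.ne
        intro i j h
        fin_cases i <;> fin_cases j <;> simp_all
      · have s1 := h1.symm; have s2 := h2.symm; have s3 := h3.symm
        have s4 := hbw.symm
        have n3 : ¬ G.Adj b a := fun h => hnab h.symm
        have n2 : ¬ G.Adj w v := fun h => hnvw h.symm
        intro i j h
        fin_cases i <;> fin_cases j <;> rw [cycleGraph_adj] at h <;>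
          first
            | exact absurd h (by decide)
            | simp_all
      · have s1 := h1.symm; have s2 := h2.symm; have s3 := h3.symm
        have s4 := hbw.symm
        have n3 : ¬ G.Adj b a := fun h => hnab h.symm
        have n2 : ¬ G.Adj w v := fun h => hnvw h.symm
        intro i j hij hH
        fin_cases i <;> fin_cases j <;>
          first
            | exact absurd rfl hij
            | exact absurd (by rw [cycleGraph_adj]; decide) hH
            | simp_all
    rw [Finset.card_eq_sum_card_fiberwise hmap]
    have hfib : ∀ X ∈ Q4C, ((T.filter (fun t => G.Adj t.2.2.1 t.2.2.2)).filter
        (fun t => ({t.1, t.2.1, t.2.2.1, t.2.2.2} : Finset V) = X)).card = 8 := by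
      intro X hX
      rw [hQ4Cdef, Finset.mem_filter] at hX
      obtain ⟨-, h4, ⟨φ⟩⟩ := hX
      obtain ⟨x, hinj, hXeq, hx⟩ := aux_iso_extract h4 φ
      have hne : ∀ i j : Fin 4, i ≠ j → x i ≠ x j := fun i j hij h => hij (hinj h)
      have a01 : G.Adj (x 0) (x 1) := (hx 0 1).mpr (by rw [cycleGraph_adj]; decide)
      have a12 : G.Adj (x 1) (x 2) := (hx 1 2).mpr (by rw [cycleGraph_adj]; decide)
      have a23 : G.Adj (x 2) (x 3) := (hx 2 3).mpr (by rw [cycleGraph_adj]; decide)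
      have a30 : G.Adj (x 3) (x 0) := (hx 3 0).mpr (by rw [cycleGraph_adj]; decide)
      have hfibeq : (T.filter (fun t => G.Adj t.2.2.1 t.2.2.2)).filter
          (fun t => ({t.1, t.2.1, t.2.2.1, t.2.2.2} : Finset V) = X) =
          ({(x 0, x 1, x 3, x 2), (x 0, x 3, x 1, x 2), (x 1, x 0, x 2, x 3),
            (x 1, x 2, x 0, x 3), (x 2, x 1, x 3, x 0), (x 2, x 3, x 1, x 0),
            (x 3, x 0, x 2, x 1), (x 3, x 2, x 0, x 1)} : Finset (V × V × V × V)) := by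
        ext ⟨v, a, b, w⟩
        simp only [Finset.mem_filter, hTdef, Finset.mem_univ, true_and,
          Finset.mem_insert, Finset.mem_singleton, Prod.mk.injEq]
        constructor
        · rintro ⟨⟨⟨h1, h2, hab, h3, hwv⟩, hbw⟩, hset⟩
          rcases aux_c4_fiber x hinj hXeq hx h1 h2 hab h3 hwv hbw hset with
            h | h | h | h | h | h | h | h <;>
            [exact Or.inl h; exact Or.inr (Or.inl h); exact Or.inr (Or.inr (Or.inl h));
             exact Or.inr (Or.inr (Or.inr (Or.inl h)));
             exact Or.inr (Or.inr (Or.inr (Or.inr (Or.inl h))));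
             exact Or.inr (Or.inr (Or.inr (Or.inr (Or.inr (Or.inl h)))));
             exact Or.inr (Or.inr (Or.inr (Or.inr (Or.inr (Or.inr (Or.inl h))))));
             exact Or.inr (Or.inr (Or.inr (Or.inr (Or.inr (Or.inr (Or.inr h))))))]
        · have hXe : ∀ p q r s : V, ({p, q, r, s} : Finset V) = ({x 0, x 1, x 2, x 3} : Finset V) →
              ({p, q, r, s} : Finset V) = X := fun p q r s h => by rw [h, hXeq]
          rintro (⟨rfl, rfl, rfl, rfl⟩ | ⟨rfl, rfl, rfl, rfl⟩ | ⟨rfl, rfl, rfl, rfl⟩ |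
            ⟨rfl, rfl, rfl, rfl⟩ | ⟨rfl, rfl, rfl, rfl⟩ | ⟨rfl, rfl, rfl, rfl⟩ |
            ⟨rfl, rfl, rfl, rfl⟩ | ⟨rfl, rfl, rfl, rfl⟩)
          · exact ⟨⟨⟨a01, a30.symm, hne 1 3 (by decide), a12, hne 2 0 (by decide)⟩,
              a23.symm⟩, hXe _ _ _ _ (by ext u; simp; tauto)⟩
          · exact ⟨⟨⟨a30.symm, a01, hne 3 1 (by decide), a23.symm, hne 2 0 (by decide)⟩,
              a12⟩, hXe _ _ _ _ (by ext u; simp; tauto)⟩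
          · exact ⟨⟨⟨a01.symm, a12, hne 0 2 (by decide), a30.symm, hne 3 1 (by decide)⟩,
              a23⟩, hXe _ _ _ _ (by ext u; simp; tauto)⟩
          · exact ⟨⟨⟨a12, a01.symm, hne 2 0 (by decide), a23, hne 3 1 (by decide)⟩,
              a30.symm⟩, hXe _ _ _ _ (by ext u; simp; tauto)⟩
          · exact ⟨⟨⟨a12.symm, a23, hne 1 3 (by decide), a01.symm, hne 0 2 (by decide)⟩,
              a30⟩, hXe _ _ _ _ (by ext u; simp; tauto)⟩
          · exact ⟨⟨⟨a23, a12.symm, hne 3 1 (by decide), a30, hne 0 2 (by decide)⟩,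
              a01.symm⟩, hXe _ _ _ _ (by ext u; simp; tauto)⟩
          · exact ⟨⟨⟨a30, a23.symm, hne 0 2 (by decide), a01, hne 1 3 (by decide)⟩,
              a12.symm⟩, hXe _ _ _ _ (by ext u; simp; tauto)⟩
          · exact ⟨⟨⟨a23.symm, a30, hne 2 0 (by decide), a12.symm, hne 1 3 (by decide)⟩,
              a01⟩, hXe _ _ _ _ (by ext u; simp; tauto)⟩
      rw [hfibeq]
      have h01 := hne 0 1 (by decide); have h02 := hne 0 2 (by decide)
      have h03 := hne 0 3 (by decide); have h12 := hne 1 2 (by decide)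
      have h13 := hne 1 3 (by decide); have h23 := hne 2 3 (by decide)
      have h10 := hne 1 0 (by decide); have h20 := hne 2 0 (by decide)
      have h30 := hne 3 0 (by decide); have h21 := hne 2 1 (by decide)
      have h31 := hne 3 1 (by decide); have h32 := hne 3 2 (by decide)
      rw [Finset.card_insert_of_notMem (by simp [Prod.ext_iff, h01, h02, h03, h12, h13,
          h23, h10, h20, h30, h21, h31, h32]),
        Finset.card_insert_of_notMem (by simp [Prod.ext_iff, h01, h02, h03, h12, h13,
          h23, h10, h20, h30, h21, h31, h32]),
        Finset.card_insert_of_notMem (by simp [Prod.ext_iff, h01, h02, h03, h12, h13,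
          h23, h10, h20, h30, h21, h31, h32]),
        Finset.card_insert_of_notMem (by simp [Prod.ext_iff, h01, h02, h03, h12, h13,
          h23, h10, h20, h30, h21, h31, h32]),
        Finset.card_insert_of_notMem (by simp [Prod.ext_iff, h01, h02, h03, h12, h13,
          h23, h10, h20, h30, h21, h31, h32]),
        Finset.card_insert_of_notMem (by simp [Prod.ext_iff, h01, h02, h03, h12, h13,
          h23, h10, h20, h30, h21, h31, h32]),
        Finset.card_insert_of_notMem (by simp [Prod.ext_iff, h01, h02, h03, h12, h13,
          h23, h10, h20, h30, h21, h31, h32]),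
        Finset.card_singleton]
    rw [Finset.sum_congr rfl hfib, Finset.sum_const, smul_eq_mul, mul_comm]
  rw [hq3, hp4, hc4, ← hTP, ← hTC, hsplit, hTcard, hP3card]
  have hh : 2 * k - 2 = 2 * (k - 1) := by omega
  rw [hh]
  ring
end

section
/- Let n be a natural number and let H be a finite simple graph that is Q-equivalent to the complete graph K_n. Then H is isomorphic to K_n. -/
open SimpleGraph

/-- A connected graph has one connected component. -/
lemma card_cc_of_connected {α : Type*} {G : SimpleGraph α} (h : G.Connected) :
    Nat.card G.ConnectedComponent = 1 := by
  haveI := h.preconnected.subsingleton_connectedComponent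
  haveI : Nonempty G.ConnectedComponent := by
    obtain ⟨v⟩ := h.nonempty
    exact ⟨G.connectedComponentMk v⟩
  exact Nat.card_eq_one_iff_unique.mpr ⟨‹_›, ‹_›⟩

/-- The bottom graph has as many components as vertices. -/
lemma card_cc_bot (α : Type*) :
    Nat.card (⊥ : SimpleGraph α).ConnectedComponent = Nat.card α := by
  refine Nat.card_congr (Equiv.ofBijective
    (fun v => (⊥ : SimpleGraph α).connectedComponentMk v) ⟨?_, ?_⟩).symm
  · intro a b hab
    exact (reachable_bot).mp ((SimpleGraph.ConnectedComponent.eq).mp hab)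
  · exact SimpleGraph.ConnectedComponent.ind (fun v => ⟨v, rfl⟩)

lemma induce_top_eq (α : Type*) (s : Set α) :
    (⊤ : SimpleGraph α).induce s = (⊤ : SimpleGraph s) := by
  ext a b
  simp [Subtype.coe_ne_coe]

/-- A subsingleton graph is preconnected. -/
lemma card_cc_of_subsingleton {α : Type*} [Nonempty α] [Subsingleton α]
    (G : SimpleGraph α) : Nat.card G.ConnectedComponent = 1 := by
  refine card_cc_of_connected ?_
  constructor
  intro a b
  rw [Subsingleton.elim a b]

lemma qij_one_one {V : Type*} [Fintype V] (G : SimpleGraph V) :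
    qij G 1 1 = Fintype.card V := by
  rw [← Nat.card_eq_fintype_card]
  refine (Nat.card_congr (Equiv.ofBijective (fun v : V => ?_) ⟨?_, ?_⟩)).symm
  · refine ⟨{v}, Finset.card_singleton v, ?_⟩
    haveI : Nonempty (({v} : Finset V) : Set V) := ⟨⟨v, by simp⟩⟩
    haveI : Subsingleton (({v} : Finset V) : Set V) := by
      constructor
      rintro ⟨a, ha⟩ ⟨b, hb⟩
      simp only [Finset.coe_singleton, Set.mem_singleton_iff] at ha hb
      simp [ha, hb]
    exact card_cc_of_subsingleton _
  · intro a b hab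
    have : ({a} : Finset V) = {b} := congrArg Subtype.val hab
    simpa using this
  · rintro ⟨X, hX, hc⟩
    obtain ⟨a, rfl⟩ := Finset.card_eq_one.mp hX
    exact ⟨a, rfl⟩

theorem completeGraph_Q_unique (n : ℕ)
    {W : Type*} [Fintype W] (H : SimpleGraph W)
    (hQ : QEquiv H (⊤ : SimpleGraph (Fin n))) :
    Nonempty (H ≃g (⊤ : SimpleGraph (Fin n))) := by
  classical
  -- card W = n
  have hcard : Fintype.card W = n := by
    have h11 := hQ 1 1
    rw [qij_one_one, qij_one_one] at h11
    simpa using h11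
  -- qij ⊤ 2 2 = 0
  have htop : qij (⊤ : SimpleGraph (Fin n)) 2 2 = 0 := by
    rw [qij]
    rw [Nat.card_eq_zero]
    left
    constructor
    rintro ⟨X, hX, hc⟩
    rw [induce_top_eq] at hc
    haveI : Nonempty ((X : Set (Fin n))) := by
      obtain ⟨a, ha⟩ := Finset.card_pos.mp (by omega : 0 < X.card)
      exact ⟨⟨a, by simpa using ha⟩⟩
    rw [card_cc_of_connected connected_top] at hc
    omega
  -- hence qij H 2 2 = 0, so H is complete
  have h22 : qij H 2 2 = 0 := (hQ 2 2).trans htop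
  have hH : H = ⊤ := by
    ext v w
    simp only [top_adj]
    constructor
    · exact H.ne_of_adj
    · intro hvw
      by_contra hadj
      rw [qij, Nat.card_eq_zero] at h22
      rcases h22 with h22 | h22
      · refine h22.false ⟨{v, w}, ?_, ?_⟩
        · rw [Finset.card_insert_of_notMem (by simpa using hvw), Finset.card_singleton]
        · have hbot : H.induce (({v, w} : Finset W) : Set W) = ⊥ := by
            ext a b
            simp only [comap_adj, Function.Embedding.coe_subtype, bot_adj, iff_false]
            intro hab
            have ha := a.2
            have hb := b.2
            simp only [Finset.coe_insert, Finset.coe_singleton, Set.mem_insert_iff,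
              Set.mem_singleton_iff] at ha hb
            rw [show (a : W) = ↑a from rfl] at ha
            rw [show (b : W) = ↑b from rfl] at hb
            rcases ha with ha | ha <;> rcases hb with hb | hb <;>
              rw [ha, hb] at hab
            · exact H.ne_of_adj hab rfl
            · exact hadj hab
            · exact hadj hab.symm
            · exact H.ne_of_adj hab rfl
          rw [hbot, card_cc_bot, Nat.card_coe_set_eq, Set.ncard_coe_finset,
            Finset.card_insert_of_notMem (by simpa using hvw), Finset.card_singleton]
      · exact absurd h22 (not_infinite_iff_finite.mpr (Finite.of_fintype _))
  subst hH
  have e : W ≃ Fin n := Fintype.equivFinOfCardEq hcard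
  exact ⟨⟨e, by intro a b; simp [e.injective.ne_iff]⟩⟩
end

section
/- Let n ≥ 1 and let H be a finite simple graph that is Q-equivalent to the path P_n. Then H is isomorphic to P_n. -/
open SimpleGraph

section AuxQPath
open Finset
variable {V : Type*} {G : SimpleGraph V}


/-- Nat.card of connected components is 1 iff connected. -/
lemma card_cc_eq_one_iff : Nat.card G.ConnectedComponent = 1 ↔ G.Connected := by
  rw [Nat.card_eq_one_iff_unique]
  constructor
  · rintro ⟨hs, ⟨c⟩⟩
    obtain ⟨v, rfl⟩ := c.exists_rep
    haveI : Nonempty V := ⟨v⟩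
    refine ⟨fun a b => ?_⟩
    exact ConnectedComponent.exact
      (@Subsingleton.elim _ hs (G.connectedComponentMk a) (G.connectedComponentMk b))
  · intro h
    obtain ⟨v⟩ := h.nonempty
    exact ⟨h.preconnected.subsingleton_connectedComponent, ⟨G.connectedComponentMk v⟩⟩

lemma exists_adj_of_reachable {u v : V} (h : G.Reachable u v) (hne : u ≠ v) :
    ∃ x, G.Adj u x := by
  obtain ⟨p⟩ := h
  cases p with
  | nil => exact absurd rfl hne
  | cons h p => exact ⟨_, h⟩

lemma qij_eq_card_filter [Fintype V] (G : SimpleGraph V) (i j : ℕ) :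
    qij G i j = (Finset.univ.filter (fun X : Finset V => X.card = i ∧
      Nat.card (G.induce (X : Set V)).ConnectedComponent = j)).card := by
  classical
  rw [qij, Nat.card_eq_fintype_card, Fintype.card_subtype]

lemma induce_connected_of_subsingleton {s : Set V} (hs : s.Subsingleton) (hne : s.Nonempty) :
    (G.induce s).Connected := by
  obtain ⟨v, hv⟩ := hne
  haveI : Nonempty s := ⟨⟨v, hv⟩⟩
  refine ⟨fun a b => ?_⟩
  have : a = b := Subtype.ext (hs a.2 b.2)
  rw [this]

lemma induce_pair_connected_iff {u v : V} (huv : u ≠ v) :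
    (G.induce ({u, v} : Set V)).Connected ↔ G.Adj u v := by
  constructor
  · intro h
    have hr := h.preconnected ⟨u, by simp⟩ ⟨v, by simp⟩
    obtain ⟨x, hx⟩ := exists_adj_of_reachable hr (by simp [huv, Subtype.ext_iff])
    have hx2 := x.2
    simp only [Set.mem_insert_iff, Set.mem_singleton_iff] at hx2
    have hadj : G.Adj u ↑x := hx
    rcases hx2 with h1 | h1
    · rw [h1] at hadj; exact absurd hadj (G.loopless.irrefl u)
    · rwa [h1] at hadj
  · intro h
    have hadj : (G.induce ({u, v} : Set V)).Adj ⟨u, by simp⟩ ⟨v, by simp⟩ := h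
    haveI : Nonempty ({u, v} : Set V) := ⟨⟨u, by simp⟩⟩
    refine ⟨fun a b => ?_⟩
    have key : ∀ c : ({u, v} : Set V), (G.induce ({u, v} : Set V)).Reachable ⟨u, by simp⟩ c := by
      rintro ⟨c, hc⟩
      simp only [Set.mem_insert_iff, Set.mem_singleton_iff] at hc
      rcases hc with rfl | rfl
      · exact Reachable.refl _
      · exact hadj.reachable
    exact (key a).symm.trans (key b)

lemma q11_eq [Fintype V] (G : SimpleGraph V) : qij G 1 1 = Fintype.card V := by
  classical
  rw [qij_eq_card_filter, ← Finset.card_univ,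
    ← Finset.card_image_of_injective (Finset.univ : Finset V)
      (fun a b h => Finset.singleton_injective h)]
  congr 1
  ext X
  simp only [Finset.mem_filter, Finset.mem_univ, true_and, Finset.mem_image]
  constructor
  · rintro ⟨h1, -⟩
    obtain ⟨a, rfl⟩ := Finset.card_eq_one.mp h1
    exact ⟨a, rfl⟩
  · rintro ⟨a, rfl⟩
    refine ⟨Finset.card_singleton a, ?_⟩
    rw [card_cc_eq_one_iff]
    exact induce_connected_of_subsingleton (by simp [Set.Subsingleton]) (by simp)

/-- pair as a finset, from an unordered pair -/
def pairFinset [DecidableEq V] : Sym2 V → Finset V :=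
  Sym2.lift ⟨fun a b => {a, b}, fun a b => Finset.pair_comm a b⟩

@[simp] lemma pairFinset_mk [DecidableEq V] (a b : V) : pairFinset s(a, b) = {a, b} := rfl

lemma q21_eq [Fintype V] [DecidableEq V] (G : SimpleGraph V) [Fintype G.edgeSet] :
    qij G 2 1 = G.edgeFinset.card := by
  classical
  rw [qij_eq_card_filter]
  refine (Finset.card_bij (fun e _ => pairFinset e) ?_ ?_ ?_).symm
  · rintro e he
    induction e with
    | _ a b =>
      rw [mem_edgeFinset, mem_edgeSet] at he
      show pairFinset s(a, b) ∈ _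
      simp only [pairFinset_mk, Finset.mem_filter, Finset.mem_univ, true_and]
      refine ⟨Finset.card_pair he.ne, ?_⟩
      rw [card_cc_eq_one_iff]
      have hco : ((({a, b} : Finset V) : Set V)) = ({a, b} : Set V) := by simp
      rw [hco]
      exact (induce_pair_connected_iff he.ne).mpr he
  · rintro e₁ h₁ e₂ h₂ h
    induction e₁ with
    | _ a b =>
      induction e₂ with
      | _ c d =>
        simp only [pairFinset_mk] at h
        rw [mem_edgeFinset, mem_edgeSet] at h₁ h₂
        have ha : a = c ∨ a = d := by
          have := (Finset.ext_iff.mp h a).mp (by simp); simpa using this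
        have hb : b = c ∨ b = d := by
          have := (Finset.ext_iff.mp h b).mp (by simp); simpa using this
        have hc : c = a ∨ c = b := by
          have := (Finset.ext_iff.mp h c).mpr (by simp); simpa using this
        rw [Sym2.eq_iff]
        rcases ha with rfl | rfl
        · rcases hb with rfl | rfl
          · exact absurd rfl h₁.ne
          · exact Or.inl ⟨rfl, rfl⟩
        · rcases hb with rfl | rfl
          · exact Or.inr ⟨rfl, rfl⟩
          · rcases hc with rfl | rfl
            · exact Or.inl ⟨rfl, rfl⟩
            · exact absurd rfl h₂.ne
  · rintro X hX
    simp only [Finset.mem_filter, Finset.mem_univ, true_and] at hX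
    obtain ⟨h2, hcc⟩ := hX
    obtain ⟨u, v, huv, rfl⟩ := Finset.card_eq_two.mp h2
    rw [card_cc_eq_one_iff] at hcc
    have hco : ((({u, v} : Finset V) : Set V)) = ({u, v} : Set V) := by simp
    rw [hco] at hcc
    have hadj := (induce_pair_connected_iff huv).mp hcc
    exact ⟨s(u, v), by simp [mem_edgeFinset, hadj], by simp⟩

lemma qn1_eq_one_iff [Fintype V] (G : SimpleGraph V) :
    qij G (Fintype.card V) 1 = 1 ↔ G.Connected := by
  classical
  rw [qij_eq_card_filter]
  constructor
  · intro h
    obtain ⟨X, hX⟩ := Finset.card_eq_one.mp h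
    have hXmem : X ∈ Finset.univ.filter (fun X : Finset V => X.card = Fintype.card V ∧
        Nat.card (G.induce (X : Set V)).ConnectedComponent = 1) := hX ▸ Finset.mem_singleton_self X
    simp only [Finset.mem_filter, Finset.mem_univ, true_and] at hXmem
    obtain ⟨hcard, hcc⟩ := hXmem
    have hXuniv : X = Finset.univ := Finset.eq_univ_of_card X hcard
    subst hXuniv
    rw [card_cc_eq_one_iff] at hcc
    have : ((Finset.univ : Finset V) : Set V) = Set.univ := Finset.coe_univ
    rw [this] at hcc
    exact (induceUnivIso G).connected_iff.mp hcc
  · intro h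
    have : Finset.univ.filter (fun X : Finset V => X.card = Fintype.card V ∧
        Nat.card (G.induce (X : Set V)).ConnectedComponent = 1) = {Finset.univ} := by
      ext X
      simp only [Finset.mem_filter, Finset.mem_univ, true_and, Finset.mem_singleton]
      constructor
      · rintro ⟨hcard, -⟩
        exact Finset.eq_univ_of_card X hcard
      · rintro rfl
        refine ⟨Finset.card_univ, ?_⟩
        rw [card_cc_eq_one_iff]
        have hco : ((Finset.univ : Finset V) : Set V) = Set.univ := Finset.coe_univ
        rw [hco]
        exact (induceUnivIso G).connected_iff.mpr h
    rw [this, Finset.card_singleton]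

lemma path_edgeFinset_card (n : ℕ) [Fintype (pathGraph n).edgeSet] :
    (pathGraph n).edgeFinset.card = n - 1 := by
  classical
  rw [← Nat.sub_zero (n-1), ← Nat.card_Ico 0 (n-1)]
  refine Finset.card_bij (fun k hk => s((⟨k, by
      have := Finset.mem_Ico.mp hk; omega⟩ : Fin n), (⟨k + 1, by
      have := Finset.mem_Ico.mp hk; omega⟩ : Fin n))) ?_ ?_ ?_ |>.symm
  · intro k hk
    rw [mem_edgeFinset, mem_edgeSet, pathGraph_adj]
    left; rfl
  · intro k₁ h₁ k₂ h₂ h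
    rw [Sym2.eq_iff] at h
    rcases h with ⟨h1, -⟩ | ⟨h1, h2⟩
    · exact congrArg Fin.val h1
    · have := congrArg Fin.val h1
      have := congrArg Fin.val h2
      simp_all; omega
  · rintro e he
    induction e with
    | _ a b =>
      rw [mem_edgeFinset, mem_edgeSet, pathGraph_adj] at he
      rcases he with h | h
      · refine ⟨a.val, Finset.mem_Ico.mpr ⟨Nat.zero_le _, by have := b.isLt; omega⟩, ?_⟩
        rw [Sym2.eq_iff]
        left
        exact ⟨Fin.ext rfl, Fin.ext (by simpa using h)⟩
      · refine ⟨b.val, Finset.mem_Ico.mpr ⟨Nat.zero_le _, by have := a.isLt; omega⟩, ?_⟩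
        rw [Sym2.eq_iff]
        right
        exact ⟨Fin.ext rfl, Fin.ext (by simpa using h)⟩

lemma not_connected_of_isolated {s : Set V} {x y : V} (hx : x ∈ s) (hy : y ∈ s) (hxy : x ≠ y)
    (hiso : ∀ z ∈ s, ¬ G.Adj x z) : ¬ (G.induce s).Connected := by
  intro h
  have hr := h.preconnected ⟨x, hx⟩ ⟨y, hy⟩
  obtain ⟨z, hz⟩ := exists_adj_of_reachable hr (by simp [hxy, Subtype.ext_iff])
  exact hiso ↑z z.2 hz

lemma star_connected [DecidableEq V] {v : V} {Y : Finset V} (hY : ∀ y ∈ Y, G.Adj v y) :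
    (G.induce ((insert v Y : Finset V) : Set V)).Connected := by
  haveI : Nonempty ((insert v Y : Finset V) : Set V) := ⟨⟨v, by simp⟩⟩
  refine ⟨fun a b => ?_⟩
  have key : ∀ c : ((insert v Y : Finset V) : Set V),
      (G.induce ((insert v Y : Finset V) : Set V)).Reachable ⟨v, by simp⟩ c := by
    rintro ⟨c, hc⟩
    simp only [Finset.coe_insert, Set.mem_insert_iff, Finset.mem_coe] at hc
    rcases hc with rfl | hc
    · exact Reachable.refl _
    · exact Adj.reachable (by exact hY c hc)
  exact (key a).symm.trans (key b)

lemma q31_eq [Fintype V] [DecidableEq V] (G : SimpleGraph V) [DecidableRel G.Adj]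
    (hT : ∀ a b c, G.Adj a b → G.Adj b c → G.Adj a c → False) :
    qij G 3 1 = ∑ v, (G.degree v).choose 2 := by
  classical
  rw [qij_eq_card_filter]
  have hrhs : ∑ v, (G.degree v).choose 2 =
      (Finset.univ.sigma fun v => (G.neighborFinset v).powersetCard 2).card := by
    rw [Finset.card_sigma]
    refine Finset.sum_congr rfl fun v _ => ?_
    rw [Finset.card_powersetCard]
    rfl
  rw [hrhs]
  refine (Finset.card_bij (fun p _ => insert p.1 p.2) ?_ ?_ ?_).symm
  · rintro ⟨v, Y⟩ hp
    rw [Finset.mem_sigma, Finset.mem_powersetCard] at hp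
    obtain ⟨-, hYsub, hYcard⟩ := hp
    have hvY : v ∉ Y := fun h => G.loopless.irrefl v (G.mem_neighborFinset v v |>.mp (hYsub h))
    have hadj : ∀ y ∈ Y, G.Adj v y := fun y hy => (G.mem_neighborFinset v y).mp (hYsub hy)
    simp only [Finset.mem_filter, Finset.mem_univ, true_and]
    refine ⟨by rw [Finset.card_insert_of_notMem hvY, hYcard], ?_⟩
    rw [card_cc_eq_one_iff]
    exact star_connected hadj
  · rintro ⟨v, Y⟩ hp ⟨v', Y'⟩ hp' h
    replace h : insert v Y = insert v' Y' := h
    rw [Finset.mem_sigma, Finset.mem_powersetCard] at hp hp'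
    obtain ⟨-, hYsub, hYcard⟩ := hp
    obtain ⟨-, hYsub', hYcard'⟩ := hp'
    have hvY : v ∉ Y := fun hh => G.loopless.irrefl v ((G.mem_neighborFinset v v).mp (hYsub hh))
    have hvY' : v' ∉ Y' := fun hh => G.loopless.irrefl v' ((G.mem_neighborFinset v' v').mp (hYsub' hh))
    by_cases hvv : v = v'
    · subst hvv
      have : Y = Y' := by
        ext y
        constructor
        · intro hy
          have : y ∈ insert v Y' := h ▸ Finset.mem_insert_of_mem hy
          rcases Finset.mem_insert.mp this with rfl | hy'
          · exact absurd hy hvY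
          · exact hy'
        · intro hy
          have : y ∈ insert v Y := h.symm ▸ Finset.mem_insert_of_mem hy
          rcases Finset.mem_insert.mp this with rfl | hy'
          · exact absurd hy hvY'
          · exact hy'
      subst this; rfl
    · exfalso
      have hv : v ∈ Y' := by
        have : v ∈ insert v' Y' := h ▸ Finset.mem_insert_self v Y
        rcases Finset.mem_insert.mp this with h1 | h1
        · exact absurd h1 hvv
        · exact h1
      have hv' : v' ∈ Y := by
        have : v' ∈ insert v Y := h.symm ▸ Finset.mem_insert_self v' Y'
        rcases Finset.mem_insert.mp this with h1 | h1
        · exact absurd h1.symm hvv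
        · exact h1
      obtain ⟨z, hzY, hzv'⟩ := Finset.exists_mem_ne (s := Y) (by rw [hYcard]; norm_num) v'
      have hzY' : z ∈ Y' := by
        have : z ∈ insert v' Y' := h ▸ Finset.mem_insert_of_mem hzY
        rcases Finset.mem_insert.mp this with h1 | h1
        · exact absurd h1 hzv'
        · exact h1
      exact hT v v' z ((G.mem_neighborFinset v v').mp (hYsub hv'))
        ((G.mem_neighborFinset v' z).mp (hYsub' hzY'))
        ((G.mem_neighborFinset v z).mp (hYsub hzY))
  · rintro X hX
    simp only [Finset.mem_filter, Finset.mem_univ, true_and] at hX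
    obtain ⟨h3, hcc⟩ := hX
    rw [card_cc_eq_one_iff] at hcc
    obtain ⟨a, b, c, hab, hac, hbc, rfl⟩ := Finset.card_eq_three.mp h3
    have hmem : ∀ x, x ∈ ((({a, b, c} : Finset V)) : Set V) ↔ x = a ∨ x = b ∨ x = c := by
      intro x; simp
    by_cases h1 : G.Adj a b
    · by_cases h2 : G.Adj a c
      · -- center a
        refine ⟨⟨a, {b, c}⟩, ?_, ?_⟩
        · rw [Finset.mem_sigma, Finset.mem_powersetCard]
          refine ⟨Finset.mem_univ a, ?_, Finset.card_pair hbc⟩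
          intro y hy
          rcases Finset.mem_insert.mp hy with rfl | hy
          · exact (G.mem_neighborFinset a y).mpr h1
          · rw [Finset.mem_singleton] at hy; subst hy
            exact (G.mem_neighborFinset a y).mpr h2
        · rfl
      · by_cases h3' : G.Adj b c
        · -- center b
          refine ⟨⟨b, {a, c}⟩, ?_, ?_⟩
          · rw [Finset.mem_sigma, Finset.mem_powersetCard]
            refine ⟨Finset.mem_univ b, ?_, Finset.card_pair hac⟩
            intro y hy
            rcases Finset.mem_insert.mp hy with rfl | hy
            · exact (G.mem_neighborFinset b y).mpr h1.symm
            · rw [Finset.mem_singleton] at hy; subst hy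
              exact (G.mem_neighborFinset b y).mpr h3'
          · ext x; simp; tauto
        · -- c isolated
          exfalso
          refine not_connected_of_isolated (G := G) (x := c) (y := a)
            ((hmem c).mpr (by tauto)) ((hmem a).mpr (by tauto)) (Ne.symm hac) ?_ hcc
          intro z hz
          rcases (hmem z).mp hz with h4 | h4 | h4 <;> rw [h4]
          · intro hadj; exact h2 hadj.symm
          · intro hadj; exact h3' hadj.symm
          · exact G.loopless.irrefl c
    · by_cases h2 : G.Adj a c
      · by_cases h3' : G.Adj b c
        · -- center c
          refine ⟨⟨c, {a, b}⟩, ?_, ?_⟩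
          · rw [Finset.mem_sigma, Finset.mem_powersetCard]
            refine ⟨Finset.mem_univ c, ?_, Finset.card_pair hab⟩
            intro y hy
            rcases Finset.mem_insert.mp hy with rfl | hy
            · exact (G.mem_neighborFinset c y).mpr h2.symm
            · rw [Finset.mem_singleton] at hy; subst hy
              exact (G.mem_neighborFinset c y).mpr h3'.symm
          · ext x; simp; tauto
        · -- b isolated
          exfalso
          refine not_connected_of_isolated (G := G) (x := b) (y := a)
            ((hmem b).mpr (by tauto)) ((hmem a).mpr (by tauto)) (Ne.symm hab) ?_ hcc
          intro z hz
          rcases (hmem z).mp hz with h4 | h4 | h4 <;> rw [h4]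
          · intro hadj; exact h1 hadj.symm
          · exact G.loopless.irrefl b
          · exact h3'
      · -- a isolated
        exfalso
        refine not_connected_of_isolated (G := G) (x := a) (y := b)
          ((hmem a).mpr (by tauto)) ((hmem b).mpr (by tauto)) hab ?_ hcc
        intro z hz
        rcases (hmem z).mp hz with h4 | h4 | h4 <;> rw [h4]
        · exact G.loopless.irrefl a
        · exact h1
        · exact h2

lemma path_degree_interior {n : ℕ} [DecidableRel (pathGraph n).Adj] {i : Fin n}
    (h1 : 0 < i.val) (h2 : i.val + 1 < n) : (pathGraph n).degree i = 2 := by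
  have hnb : (pathGraph n).neighborFinset i =
      {(⟨i.val - 1, by omega⟩ : Fin n), (⟨i.val + 1, by omega⟩ : Fin n)} := by
    ext j
    rw [mem_neighborFinset, pathGraph_adj]
    simp only [Finset.mem_insert, Finset.mem_singleton, Fin.ext_iff]
    omega
  rw [degree, hnb, Finset.card_pair (Fin.ne_of_val_ne (show i.val - 1 ≠ i.val + 1 by omega))]

lemma path_degree_le_one {n : ℕ} [DecidableRel (pathGraph n).Adj] {i : Fin n}
    (h : ¬ (0 < i.val ∧ i.val + 1 < n)) : (pathGraph n).degree i ≤ 1 := by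
  rw [degree]
  apply Finset.card_le_one.mpr
  intro j hj k hk
  rw [mem_neighborFinset, pathGraph_adj] at hj hk
  have := i.isLt
  rw [Fin.ext_iff]
  omega

lemma path_degree_le_two {n : ℕ} [DecidableRel (pathGraph n).Adj] (i : Fin n) :
    (pathGraph n).degree i ≤ 2 := by
  by_cases h : 0 < i.val ∧ i.val + 1 < n
  · rw [path_degree_interior h.1 h.2]
  · exact le_trans (path_degree_le_one h) (by norm_num)

lemma path_sum_choose (n : ℕ) [DecidableRel (pathGraph n).Adj] :
    ∑ i : Fin n, ((pathGraph n).degree i).choose 2 = n - 2 := by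
  classical
  have h1 : ∀ i : Fin n, ((pathGraph n).degree i).choose 2 =
      if 0 < i.val ∧ i.val + 1 < n then 1 else 0 := by
    intro i
    by_cases h : 0 < i.val ∧ i.val + 1 < n
    · rw [path_degree_interior h.1 h.2, if_pos h]
      decide
    · rw [if_neg h]
      exact Nat.choose_eq_zero_of_lt (by have := path_degree_le_one h; omega)
  rw [Finset.sum_congr rfl (fun i _ => h1 i), Finset.sum_boole, Nat.cast_id]
  have h2 : n - 2 = (Finset.Ico 1 (n-1)).card := by rw [Nat.card_Ico]; omega
  rw [h2]
  refine (Finset.card_bij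
    (fun (k : ℕ) (hk : k ∈ Finset.Ico 1 (n-1)) =>
      (⟨k, by have := Finset.mem_Ico.mp hk; omega⟩ : Fin n)) ?_ ?_ ?_).symm
  · intro k hk
    have := Finset.mem_Ico.mp hk
    simp only [Finset.mem_filter, Finset.mem_univ, true_and]
    exact ⟨by omega, by omega⟩
  · intro k₁ h₁ k₂ h₂ h
    exact congrArg Fin.val h
  · intro i hi
    simp only [Finset.mem_filter, Finset.mem_univ, true_and] at hi
    exact ⟨i.val, Finset.mem_Ico.mpr (by omega), rfl⟩

lemma path_triangle_free {n : ℕ} : ∀ a b c : Fin n,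
    (pathGraph n).Adj a b → (pathGraph n).Adj b c → (pathGraph n).Adj a c → False := by
  intro a b c hab hbc hac
  rw [pathGraph_adj] at hab hbc hac
  omega

lemma le_choose_two {d : ℕ} (h3 : 3 ≤ d) : d ≤ d.choose 2 := by
  induction d, h3 using Nat.le_induction with
  | base => decide
  | succ m hm ih =>
    have hrec : (m+1).choose 2 = m.choose 1 + m.choose 2 := rfl
    rw [Nat.choose_one_right] at hrec
    omega

lemma le_choose_two_add_one {d : ℕ} (h1 : 1 ≤ d) : d ≤ d.choose 2 + 1 := by
  rcases Nat.lt_or_ge d 3 with h | h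
  · interval_cases d <;> decide
  · have := le_choose_two h; omega

lemma degree_le_two_global {V : Type*} [Fintype V] (G : SimpleGraph V) [DecidableRel G.Adj]
    (hconn : G.Connected) (hn : 2 ≤ Fintype.card V)
    (hedge : G.edgeFinset.card + 1 = Fintype.card V)
    (hsum : ∑ v, (G.degree v).choose 2 = Fintype.card V - 2) :
    ∀ v, G.degree v ≤ 2 := by
  have hdegpos : ∀ v, 1 ≤ G.degree v := by
    intro v
    obtain ⟨w, hw⟩ := Fintype.exists_ne_of_one_lt_card (by omega) v
    obtain ⟨x, hx⟩ := exists_adj_of_reachable (hconn.preconnected v w) (Ne.symm hw)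
    rw [Nat.one_le_iff_ne_zero, ← Nat.pos_iff_ne_zero]
    exact G.degree_pos_iff_exists_adj v |>.mpr ⟨x, hx⟩
  by_contra hcon
  push_neg at hcon
  obtain ⟨v0, hv0⟩ := hcon
  have hlt : ∑ v, G.degree v < ∑ v, ((G.degree v).choose 2 + 1) := by
    refine Finset.sum_lt_sum (fun i _ => le_choose_two_add_one (hdegpos i)) ⟨v0, Finset.mem_univ v0, ?_⟩
    have := le_choose_two (by omega : 3 ≤ G.degree v0)
    omega
  rw [Finset.sum_add_distrib, hsum, Finset.sum_const, Finset.card_univ, smul_eq_mul, mul_one] at hlt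
  have hhs := G.sum_degrees_eq_twice_card_edges
  omega

lemma card_le_edge_card_add_one {V : Type*} [Fintype V] (G : SimpleGraph V)
    [Fintype G.edgeSet] (hconn : G.Connected) :
    Fintype.card V ≤ G.edgeFinset.card + 1 := by
  classical
  obtain ⟨v0⟩ := hconn.nonempty
  have hstep : ∀ v : V, v ≠ v0 → ∃ w, G.Adj v w ∧ G.dist w v0 < G.dist v v0 := by
    intro v hv
    obtain ⟨p, hp⟩ := (hconn.preconnected v v0).exists_walk_length_eq_dist
    cases p with
    | nil => exact absurd rfl hv
    | cons hadj q =>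
      refine ⟨_, hadj, ?_⟩
      have h1 := SimpleGraph.dist_le q
      rw [Walk.length_cons] at hp
      omega
  set f : V → Sym2 V := fun v =>
    if h : v ≠ v0 then s(v, Classical.choose (hstep v h)) else s(v, v) with hf
  have hkey : (Finset.univ.erase v0).card ≤ G.edgeFinset.card := by
    refine Finset.card_le_card_of_injOn f ?_ ?_
    · intro v hv
      have hv' : v ≠ v0 := (Finset.mem_erase.mp hv).1
      obtain ⟨hadj, -⟩ := Classical.choose_spec (hstep v hv')
      rw [hf]
      simp only [dif_pos hv']
      rw [Finset.mem_coe, mem_edgeFinset, mem_edgeSet]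
      exact hadj
    · intro a ha b hb hab
      have ha' : a ≠ v0 := (Finset.mem_erase.mp (Finset.mem_coe.mp ha)).1
      have hb' : b ≠ v0 := (Finset.mem_erase.mp (Finset.mem_coe.mp hb)).1
      obtain ⟨-, hda⟩ := Classical.choose_spec (hstep a ha')
      obtain ⟨-, hdb⟩ := Classical.choose_spec (hstep b hb')
      rw [hf] at hab
      simp only [dif_pos ha', dif_pos hb'] at hab
      rw [Sym2.eq_iff] at hab
      rcases hab with ⟨h1, -⟩ | ⟨h1, h2⟩
      · exact h1
      · rw [← h1] at hdb; rw [h2] at hda; omega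
  rw [Finset.card_erase_of_mem (Finset.mem_univ v0), Finset.card_univ] at hkey
  omega

lemma reachable_deleteEdges {V : Type*} {G : SimpleGraph V} {u w : V}
    (hadj : G.Adj u w) (hreach : (G.deleteEdges {s(u, w)}).Reachable u w) :
    ∀ x y : V, G.Reachable x y → (G.deleteEdges {s(u, w)}).Reachable x y := by
  intro x y hxy
  obtain ⟨p⟩ := hxy
  induction p with
  | nil => exact Reachable.refl _
  | @cons x z y hxz q ih =>
    refine Reachable.trans ?_ ih
    by_cases he : s(x, z) = s(u, w)
    · rw [Sym2.eq_iff] at he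
      rcases he with ⟨rfl, rfl⟩ | ⟨rfl, rfl⟩
      · exact hreach
      · exact hreach.symm
    · exact Adj.reachable (by rw [deleteEdges_adj]; exact ⟨hxz, by simpa using he⟩)

lemma isAcyclic_of_card {V : Type*} [Fintype V] (G : SimpleGraph V)
    [Fintype G.edgeSet] (hconn : G.Connected)
    (hcard : G.edgeFinset.card + 1 = Fintype.card V) : G.IsAcyclic := by
  classical
  intro v c hc
  cases c with
  | nil => exact hc.not_of_nil
  | @cons v b v hadj q =>
    have hmem : s(v, b) ∈ (Walk.cons hadj q).edges := by
      rw [Walk.edges_cons]; exact List.mem_cons_self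
    have hbr : ¬ G.IsBridge s(v, b) := by
      rw [isBridge_iff_adj_and_forall_cycle_notMem hadj]
      push_neg
      exact ⟨v, Walk.cons hadj q, hc, hmem⟩
    rw [isBridge_iff] at hbr
    push_neg at hbr
    have hreach := hbr
    have hreach' : (G.deleteEdges {s(v, b)}).Reachable v b := by
      convert hreach using 2
    haveI : Fintype ↥(G.deleteEdges {s(v, b)}).edgeSet := Fintype.ofFinite _
    have hG'conn : (G.deleteEdges {s(v, b)}).Connected := by
      haveI : Nonempty V := hconn.nonempty
      exact ⟨fun x y => reachable_deleteEdges hadj hreach' x y (hconn.preconnected x y)⟩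
    have hG'edges : (G.deleteEdges {s(v, b)}).edgeFinset = G.edgeFinset.erase s(v, b) := by
      ext e
      rw [mem_edgeFinset, Finset.mem_erase, mem_edgeFinset, edgeSet_deleteEdges]
      simp [and_comm]
    have hle := card_le_edge_card_add_one (G.deleteEdges {s(v, b)}) hG'conn
    rw [hG'edges, Finset.card_erase_of_mem (by rw [mem_edgeFinset]; exact hadj)] at hle
    have hpos : 1 ≤ G.edgeFinset.card := Finset.card_pos.mpr ⟨s(v, b), by rw [mem_edgeFinset]; exact hadj⟩
    omega

lemma triangle_free_of_acyclic {V : Type*} {G : SimpleGraph V} (h : G.IsAcyclic) :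
    ∀ a b c : V, G.Adj a b → G.Adj b c → G.Adj a c → False := by
  intro a b c hab hbc hac
  refine h (Walk.cons hab (Walk.cons hbc (Walk.cons hac.symm Walk.nil))) ?_
  have h1 : a ≠ b := hab.ne
  have h2 : b ≠ c := hbc.ne
  have h3 : a ≠ c := hac.ne
  rw [Walk.isCycle_def]
  refine ⟨?_, by simp, ?_⟩
  · rw [Walk.isTrail_def]
    simp only [Walk.edges_cons, Walk.edges_nil]
    simp [Sym2.eq_iff, h1, h2, h3, Ne.symm h1, Ne.symm h2, Ne.symm h3]
  · simp only [Walk.support_cons, Walk.support_nil, List.tail_cons]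
    simp [List.nodup_cons]
    exact ⟨⟨h2, h1.symm⟩, h3.symm⟩

lemma reachable_induce_of_walk {s : Set V} {x y : V} (p : G.Walk x y)
    (hp : ∀ z ∈ p.support, z ∈ s) :
    (G.induce s).Reachable ⟨x, hp x p.start_mem_support⟩ ⟨y, hp y p.end_mem_support⟩ := by
  induction p with
  | nil => exact Reachable.refl _
  | @cons x z y h q ih =>
    refine Reachable.trans (Adj.reachable ?_) (ih fun a ha => hp a (by simp [ha]))
    exact (h : G.Adj x z)

lemma iso_degree {V' W' : Type*} [Fintype V'] [Fintype W'] {A : SimpleGraph V'}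
    {B : SimpleGraph W'} [DecidableRel A.Adj] [DecidableRel B.Adj]
    (e : A ≃g B) (v : V') : B.degree (e v) = A.degree v := by
  rw [← card_neighborSet_eq_degree, ← card_neighborSet_eq_degree]
  exact Fintype.card_congr (e.mapNeighborSet v).symm

lemma induce_compl_leaf_connected (hconn : G.Connected) {u w : V}
    (hN : G.neighborSet u = {w}) :
    (G.induce ({u}ᶜ : Set V)).Connected := by
  classical
  have hadj_uw : G.Adj u w := by
    have : w ∈ G.neighborSet u := by rw [hN]; rfl
    exact this
  have hwne : w ≠ u := hadj_uw.ne'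
  have hzw : ∀ z, G.Adj u z → z = w := by
    intro z hz
    have : z ∈ G.neighborSet u := hz
    rwa [hN, Set.mem_singleton_iff] at this
  haveI : Nonempty ({u}ᶜ : Set V) := ⟨⟨w, by simp [hwne]⟩⟩
  refine ⟨fun x y => ?_⟩
  obtain ⟨xv, hx⟩ := x
  obtain ⟨yv, hy⟩ := y
  rw [Set.mem_compl_iff, Set.mem_singleton_iff] at hx hy
  obtain ⟨p0⟩ := hconn.preconnected xv yv
  let qq : G.Path xv yv := p0.toPath
  have hq := qq.prop
  have hu : u ∉ qq.val.support := by
    by_contra hu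
    set q1 := qq.val.takeUntil u hu with hq1
    set q2 := qq.val.dropUntil u hu with hq2
    have hnodup : (q1.support ++ q2.support.tail).Nodup := by
      rw [← Walk.support_append, Walk.take_spec]
      exact hq.support_nodup
    have hw1 : w ∈ q1.support := by
      have hnil : ¬ q1.reverse.Nil := Walk.not_nil_of_ne (Ne.symm hx)
      have hadj := q1.reverse.adj_snd hnil
      have hzw1 : q1.reverse.getVert 1 = w := hzw _ hadj
      have hmem : q1.reverse.getVert 1 ∈ q1.reverse.support := by
        rw [← Walk.cons_support_tail hnil]
        exact List.mem_cons_of_mem _ (Walk.start_mem_support _)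
      rw [hzw1] at hmem
      rwa [Walk.support_reverse, List.mem_reverse] at hmem
    have hw2 : w ∈ q2.support.tail := by
      have hnil : ¬ q2.Nil := Walk.not_nil_of_ne (Ne.symm hy)
      have hadj := q2.adj_snd hnil
      have hzw2 : q2.getVert 1 = w := hzw _ hadj
      have hmem : q2.getVert 1 ∈ q2.tail.support := Walk.start_mem_support _
      rw [Walk.support_tail_of_not_nil _ hnil] at hmem
      rwa [hzw2] at hmem
    have hdisj := (List.nodup_append'.mp hnodup).2.2
    exact hdisj hw1 hw2
  have hmem : ∀ z ∈ qq.val.support, z ∈ ({u}ᶜ : Set V) := by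
    intro z hz
    rw [Set.mem_compl_iff, Set.mem_singleton_iff]
    rintro rfl
    exact hu hz
  exact reachable_induce_of_walk qq.val hmem

def pathReverse (n : ℕ) : pathGraph n ≃g pathGraph n where
  toEquiv := Function.Involutive.toPerm
    (fun i : Fin n => ⟨n - 1 - i.val, by have := i.isLt; omega⟩)
    (by intro i; have := i.isLt; exact Fin.ext (show n-1-(n-1-i.val) = i.val by omega))
  map_rel_iff' := by
    intro a b
    have ha := a.isLt
    have hb := b.isLt
    simp only [Function.Involutive.toPerm, Equiv.coe_fn_mk, pathGraph_adj]
    constructor <;> (intro h; omega)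

lemma pathReverse_val {n : ℕ} (i : Fin n) : (pathReverse n i).val = n - 1 - i.val := rfl

theorem classify (n : ℕ) {W : Type*} [Fintype W] (H : SimpleGraph W) [DecidableRel H.Adj]
    (hconn : H.Connected) (hacyc : H.IsAcyclic) (hdeg : ∀ v, H.degree v ≤ 2)
    (hcard : Fintype.card W = n) : Nonempty (H ≃g pathGraph n) := by
  induction n generalizing W with
  | zero =>
    haveI := hconn.nonempty
    exact absurd hcard Fintype.card_ne_zero
  | succ n ih =>
    rcases Nat.eq_zero_or_pos n with rfl | hn
    · haveI hsub : Subsingleton W := Fintype.card_le_one_iff_subsingleton.mp (by omega)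
      haveI : Subsingleton (Fin (0+1)) := by simp only [Nat.zero_add]; infer_instance
      refine ⟨⟨Fintype.equivOfCardEq (by simp [hcard]), ?_⟩⟩
      intro a b
      exact iff_of_false (fun h => h.ne (Subsingleton.elim _ _))
        (fun h => h.ne (Subsingleton.elim _ _))
    · classical
      have htree : H.IsTree := ⟨hconn, hacyc⟩
      have hedge := htree.card_edgeFinset
      have hsumdeg := H.sum_degrees_eq_twice_card_edges
      have hex : ∃ u, H.degree u = 1 := by
        by_contra hno
        push_neg at hno
        have h2 : ∀ v, 2 ≤ H.degree v := by
          intro v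
          have h1 : 0 < H.degree v := by
            obtain ⟨w', hw'⟩ := Fintype.exists_ne_of_one_lt_card (by omega) v
            obtain ⟨x, hx⟩ := exists_adj_of_reachable (hconn.preconnected v w') (Ne.symm hw')
            exact (H.degree_pos_iff_exists_adj v).mpr ⟨x, hx⟩
          have := hno v; omega
        have hge : 2 * Fintype.card W ≤ ∑ v, H.degree v := by
          calc 2 * Fintype.card W = ∑ _v : W, 2 := by
                rw [Finset.sum_const, Finset.card_univ]; ring
          _ ≤ _ := Finset.sum_le_sum (fun i _ => h2 i)
        omega
      obtain ⟨u, hu⟩ := hex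
      obtain ⟨w, hw⟩ := Finset.card_eq_one.mp (hu : (H.neighborFinset u).card = 1)
      have hNset : H.neighborSet u = {w} := by
        ext z
        simp only [Set.mem_singleton_iff, mem_neighborSet]
        rw [← mem_neighborFinset, hw, Finset.mem_singleton]
      have hadj_uw : H.Adj u w := by
        rw [← mem_neighborSet, hNset]; rfl
      have hwu : w ≠ u := hadj_uw.ne'
      set s : Set W := {u}ᶜ with hs
      have hmem_s : ∀ x : W, x ∈ s ↔ x ≠ u := by intro x; simp [hs]
      letI : DecidableRel (H.induce s).Adj := fun a b =>
        (inferInstance : Decidable (H.Adj a.1 b.1))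
      have hcards : Fintype.card s = n := by
        have h1 : Fintype.card s = Fintype.card W - Fintype.card ({u} : Set W) := by
          rw [← Fintype.card_compl_set]
        rw [h1, Set.card_singleton, hcard]
        omega
      have hconn' : (H.induce s).Connected := induce_compl_leaf_connected hconn hNset
      have hacyc' : (H.induce s).IsAcyclic := by
        intro v c hc
        exact hacyc _ ((Walk.map_isCycle_iff_of_injective
          (f := (⟨Subtype.val, fun {a b} h => h⟩ : H.induce s →g H)) Subtype.val_injective).mpr hc)
      have hdeg' : ∀ x : s, (H.induce s).degree x ≤ 2 := by
        intro x
        refine le_trans ?_ (hdeg x.1)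
        refine Finset.card_le_card_of_injOn (fun y => y.1) ?_ ?_
        · intro y hy
          rw [Finset.mem_coe, mem_neighborFinset] at hy ⊢
          exact hy
        · exact fun a _ b _ hab => Subtype.ext hab
      obtain ⟨e'⟩ := ih (H.induce s) hconn' hacyc' hdeg' hcards
      have hws : w ∈ s := (hmem_s w).mpr hwu
      have hdegw : (H.induce s).degree ⟨w, hws⟩ ≤ 1 := by
        have hle : (H.induce s).degree ⟨w, hws⟩ ≤ ((H.neighborFinset w).erase u).card := by
          refine Finset.card_le_card_of_injOn (fun y => y.1) ?_ ?_
          · intro y hy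
            rw [Finset.mem_coe, mem_neighborFinset] at hy
            rw [Finset.mem_coe, Finset.mem_erase, mem_neighborFinset]
            exact ⟨(hmem_s y.1).mp y.2, hy⟩
          · exact fun a _ b _ hab => Subtype.ext hab
        have hce : ((H.neighborFinset w).erase u).card = H.degree w - 1 := by
          rw [Finset.card_erase_of_mem (by rw [mem_neighborFinset]; exact hadj_uw.symm)]
          rfl
        have := hdeg w
        omega
      have hj : (e' ⟨w, hws⟩).val = 0 ∨ (e' ⟨w, hws⟩).val = n - 1 := by
        by_contra hcon
        push_neg at hcon
        have hlt := (e' ⟨w, hws⟩).isLt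
        have hint1 : 0 < (e' ⟨w, hws⟩).val := by omega
        have hint2 : (e' ⟨w, hws⟩).val + 1 < n := by omega
        have h2' := path_degree_interior hint1 hint2
        have h3' := iso_degree e' ⟨w, hws⟩
        omega
      have hE : ∃ e'' : (H.induce s) ≃g pathGraph n, (e'' ⟨w, hws⟩).val = n - 1 := by
        rcases hj with h0 | h1
        · refine ⟨e'.trans (pathReverse n), ?_⟩
          have : ((e'.trans (pathReverse n)) ⟨w, hws⟩).val =
              n - 1 - (e' ⟨w, hws⟩).val := rfl
          rw [this, h0]
          omega
        · exact ⟨e', h1⟩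
      obtain ⟨e'', hwend⟩ := hE
      let φ : W → Fin (n+1) := fun x =>
        if h : x = u then Fin.last n else (e'' ⟨x, (hmem_s x).mpr h⟩).castSucc
      have hφu : φ u = Fin.last n := dif_pos rfl
      have hφ : ∀ (x : W) (h : x ≠ u), φ x = (e'' ⟨x, (hmem_s x).mpr h⟩).castSucc :=
        fun x h => dif_neg h
      have hinj : Function.Injective φ := by
        intro a b hab
        by_cases ha : a = u <;> by_cases hb : b = u
        · rw [ha, hb]
        · exfalso
          rw [ha, hφu, hφ b hb] at hab
          have hv := congrArg Fin.val hab
          rw [Fin.val_last, Fin.coe_castSucc] at hv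
          have := (e'' ⟨b, (hmem_s b).mpr hb⟩).isLt
          omega
        · exfalso
          rw [hb, hφu, hφ a ha] at hab
          have hv := congrArg Fin.val hab
          rw [Fin.val_last, Fin.coe_castSucc] at hv
          have := (e'' ⟨a, (hmem_s a).mpr ha⟩).isLt
          omega
        · rw [hφ a ha, hφ b hb] at hab
          have h1 := Fin.castSucc_injective n hab
          have h2 := e''.toEquiv.injective h1
          exact congrArg Subtype.val h2
      have hbij : Function.Bijective φ :=
        (Fintype.bijective_iff_injective_and_card φ).mpr ⟨hinj, by rw [hcard]; simp⟩
      refine ⟨⟨Equiv.ofBijective φ hbij, ?_⟩⟩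
      intro a b
      show (pathGraph (n+1)).Adj (φ a) (φ b) ↔ H.Adj a b
      have hADJ : ∀ x : W, H.Adj u x ↔ x = w := by
        intro x
        rw [← mem_neighborSet, hNset, Set.mem_singleton_iff]
      have hbw : ∀ (x : W) (hx : x ≠ u),
          ((e'' ⟨x, (hmem_s x).mpr hx⟩).val = n - 1 ↔ x = w) := by
        intro x hx
        constructor
        · intro hv
          have : e'' ⟨x, (hmem_s x).mpr hx⟩ = e'' ⟨w, hws⟩ := Fin.ext (by rw [hv, hwend])
          have := e''.toEquiv.injective this
          exact congrArg Subtype.val this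
        · rintro rfl
          exact hwend
      by_cases ha : a = u <;> by_cases hb : b = u
      · subst ha; subst hb
        exact iff_of_false ((pathGraph (n+1)).loopless.irrefl _) (H.loopless.irrefl _)
      · subst ha
        rw [hφu, hφ b hb, pathGraph_adj]
        simp only [Fin.val_last, Fin.coe_castSucc]
        have hlt := (e'' ⟨b, (hmem_s b).mpr hb⟩).isLt
        rw [hADJ b]
        rw [← hbw b hb]
        omega
      · subst hb
        rw [hφu, hφ a ha, pathGraph_adj]
        simp only [Fin.val_last, Fin.coe_castSucc]
        have hlt := (e'' ⟨a, (hmem_s a).mpr ha⟩).isLt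
        rw [H.adj_comm, hADJ a, ← hbw a ha]
        omega
      · rw [hφ a ha, hφ b hb, pathGraph_adj]
        simp only [Fin.coe_castSucc]
        have hmr := e''.map_rel_iff'
          (a := ⟨a, (hmem_s a).mpr ha⟩) (b := ⟨b, (hmem_s b).mpr hb⟩)
        rw [pathGraph_adj] at hmr
        exact hmr.trans (Iff.rfl)

end AuxQPath

theorem path_Q_unique (n : ℕ) (hn : 1 ≤ n)
    {W : Type*} [Fintype W] (H : SimpleGraph W)
    (hQ : QEquiv H (pathGraph n)) :
    Nonempty (H ≃g pathGraph n) := by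
  classical
  letI : DecidableEq W := Classical.decEq _
  letI : DecidableRel H.Adj := Classical.decRel _
  letI : DecidableRel (pathGraph n).Adj := Classical.decRel _
  have hcardW : Fintype.card W = n := by
    have h := hQ 1 1
    rw [q11_eq, q11_eq] at h
    simpa using h
  have hconn : H.Connected := by
    have h := hQ n 1
    have hP : qij (pathGraph n) n 1 = 1 := by
      have h2 := qn1_eq_one_iff (pathGraph n)
      rw [Fintype.card_fin] at h2
      refine h2.mpr ?_
      obtain ⟨m, rfl⟩ := Nat.exists_eq_succ_of_ne_zero (by omega : n ≠ 0)
      exact pathGraph_connected m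
    rw [hP] at h
    have h3 := qn1_eq_one_iff H
    rw [hcardW] at h3
    exact h3.mp h
  have hedgecard : H.edgeFinset.card = n - 1 := by
    have h := hQ 2 1
    rw [q21_eq, q21_eq, path_edgeFinset_card] at h
    exact h
  have hedge1 : H.edgeFinset.card + 1 = Fintype.card W := by
    rw [hcardW, hedgecard]; omega
  have hacyc := isAcyclic_of_card H hconn hedge1
  have htf := triangle_free_of_acyclic hacyc
  have hsum : ∑ v, (H.degree v).choose 2 = n - 2 := by
    have h := hQ 3 1
    rw [q31_eq H htf, q31_eq (pathGraph n) (fun a b c => path_triangle_free a b c),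
      path_sum_choose] at h
    exact h
  have hdeg : ∀ v, H.degree v ≤ 2 := by
    rcases Nat.lt_or_ge n 2 with h2 | h2
    · intro v
      have := H.degree_lt_card_verts v
      omega
    · exact degree_le_two_global H hconn (by omega) hedge1 (by rw [hcardW]; exact hsum)
  exact classify n H hconn hacyc hdeg hcardW
end

section
/- Let m ≥ n ≥ 1 and let H be a finite simple graph that is Q-equivalent to the complete bipartite graph K_{m,n}. Then H is isomorphic to K_{m,n}. -/
open SimpleGraph

namespace QAux

open Finset

/-! ### Basic connected component counting lemmas -/

lemma isolated_reach {V : Type*} {G : SimpleGraph V} {w u : V}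
    (hw : ∀ x, ¬ G.Adj w x) (h : G.Reachable w u) : w = u := by
  obtain ⟨p⟩ := h
  cases p with
  | nil => rfl
  | cons h' p => exact absurd h' (hw _)

lemma cc_surj {V : Type*} (G : SimpleGraph V) :
    Function.Surjective G.connectedComponentMk := fun c => c.exists_rep

lemma card_cc_eq_card_iff' {V : Type*} [Finite V] (G : SimpleGraph V) :
    Nat.card G.ConnectedComponent = Nat.card V ↔ ∀ a b, ¬ G.Adj a b := by
  constructor
  · intro h a b hab
    have := Fintype.ofFinite G.ConnectedComponent
    have := Fintype.ofFinite V
    rw [Nat.card_eq_fintype_card, Nat.card_eq_fintype_card] at h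
    have hbij : Function.Bijective G.connectedComponentMk := by
      rw [Fintype.bijective_iff_surjective_and_card]
      exact ⟨cc_surj G, h.symm⟩
    exact hab.ne (hbij.injective (ConnectedComponent.sound hab.reachable))
  · intro h
    have hinj : Function.Injective G.connectedComponentMk := by
      intro a b hab
      exact isolated_reach (fun x => h a x) (ConnectedComponent.exact hab)
    exact (Nat.card_eq_of_bijective _ ⟨hinj, cc_surj G⟩).symm

lemma card_cc_eq_one_iff {V : Type*} (G : SimpleGraph V) :
    Nat.card G.ConnectedComponent = 1 ↔ G.Connected := by
  rw [Nat.card_eq_one_iff_unique, connected_iff]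
  constructor
  · rintro ⟨hs, hne⟩
    refine ⟨fun a b => ConnectedComponent.exact (Subsingleton.elim _ _), ?_⟩
    obtain ⟨c⟩ := hne
    obtain ⟨a, -⟩ := c.exists_rep
    exact ⟨a⟩
  · rintro ⟨hp, hne⟩
    refine ⟨⟨fun a b => ?_⟩, hne.map G.connectedComponentMk⟩
    obtain ⟨a, rfl⟩ := a.exists_rep
    obtain ⟨b, rfl⟩ := b.exists_rep
    exact ConnectedComponent.sound (hp a b)

lemma nat_card_set_coe {V : Type*} (X : Finset V) : Nat.card (↑X : Set V) = X.card := by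
  rw [Nat.card_coe_set_eq, Set.ncard_coe_finset]

lemma induce_edgeless_iff {V : Type*} [Fintype V] (G : SimpleGraph V) (X : Finset V) :
    Nat.card (G.induce (X : Set V)).ConnectedComponent = X.card ↔
      ∀ a ∈ X, ∀ b ∈ X, ¬ G.Adj a b := by
  rw [← nat_card_set_coe X, card_cc_eq_card_iff']
  constructor
  · intro h a ha b hb hab
    exact h ⟨a, ha⟩ ⟨b, hb⟩ hab
  · rintro h ⟨a, ha⟩ ⟨b, hb⟩ hab
    exact h a ha b hb hab

/-! ### `qij` as a finset cardinality -/

lemma qij_eq_filter {V : Type*} [Fintype V] (G : SimpleGraph V) (i j : ℕ) :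
    qij G i j = (univ.filter (fun X : Finset V => X.card = i ∧
      Nat.card (G.induce (X : Set V)).ConnectedComponent = j)).card := by
  classical
  rw [qij, Nat.card_eq_fintype_card, Fintype.card_subtype]

lemma qij_eq_zero_iff {V : Type*} [Fintype V] (G : SimpleGraph V) (i j : ℕ) :
    qij G i j = 0 ↔ ∀ X : Finset V, X.card = i →
      Nat.card (G.induce (X : Set V)).ConnectedComponent ≠ j := by
  classical
  rw [qij_eq_filter, Finset.card_eq_zero, Finset.eq_empty_iff_forall_notMem]
  simp only [mem_filter, mem_univ, true_and, not_and]

lemma qij_diag {V : Type*} [Fintype V] (G : SimpleGraph V) (i : ℕ) (hi : 1 ≤ i)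
    {ι : Type*} [Fintype ι] (F : ι → Finset V)
    (hdisj : ∀ t s, t ≠ s → Disjoint (F t) (F s))
    (hchar : ∀ X : Finset V, X.card = i →
      ((∀ a ∈ X, ∀ b ∈ X, ¬ G.Adj a b) ↔ ∃ t, X ⊆ F t)) :
    qij G i i = ∑ t, (F t).card.choose i := by
  classical
  rw [qij_eq_filter]
  have hset : (univ.filter (fun X : Finset V => X.card = i ∧
      Nat.card (G.induce (X : Set V)).ConnectedComponent = i)) =
      univ.biUnion (fun t => (F t).powersetCard i) := by
    ext X
    simp only [mem_filter, mem_univ, true_and, mem_biUnion, mem_powersetCard]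
    constructor
    · rintro ⟨hc, hcc⟩
      subst hc
      rw [induce_edgeless_iff, hchar X rfl] at hcc
      obtain ⟨t, ht⟩ := hcc
      exact ⟨t, ht, rfl⟩
    · rintro ⟨t, hsub, hc⟩
      subst hc
      refine ⟨rfl, ?_⟩
      rw [induce_edgeless_iff, hchar X rfl]
      exact ⟨t, hsub⟩
  rw [hset, Finset.card_biUnion]
  · simp [Finset.card_powersetCard]
  · intro t _ s _ hts
    rw [Function.onFun, Finset.disjoint_left]
    intro X hXt hXs
    rw [mem_powersetCard] at hXt hXs
    obtain ⟨x, hx⟩ : X.Nonempty := by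
      rw [← Finset.card_pos, hXt.2]; omega
    exact Finset.disjoint_left.mp (hdisj t s hts) (hXt.1 hx) (hXs.1 hx)

/-! ### The induced `K₂ ∪ K₁` has two components -/

lemma triple_cc_two {V : Type*} [Fintype V] [DecidableEq V] (G : SimpleGraph V) {a b c : V}
    (hab : G.Adj a b) (hca : ¬ G.Adj c a) (hcb : ¬ G.Adj c b) :
    Nat.card (G.induce (({a, b, c} : Finset V) : Set V)).ConnectedComponent = 2 := by
  have hne_ab : a ≠ b := hab.ne
  have hne_ca : c ≠ a := fun h => hcb (h ▸ hab)
  have hne_cb : c ≠ b := fun h => hca (h ▸ hab.symm)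
  set S : Set V := (({a, b, c} : Finset V) : Set V) with hS
  have haS : a ∈ S := by simp [hS]
  have hbS : b ∈ S := by simp [hS]
  have hcS : c ∈ S := by simp [hS]
  set G' := G.induce S with hG'
  have hmem : ∀ x : S, (x : V) = a ∨ (x : V) = b ∨ (x : V) = c := by
    rintro ⟨x, hx⟩
    simpa [hS] using hx
  have hciso : ∀ y : S, ¬ G'.Adj ⟨c, hcS⟩ y := by
    rintro ⟨y, hy⟩ hadj
    rw [hG'] at hadj
    simp only [comap_adj, Function.Embedding.coe_subtype] at hadj
    rcases hmem ⟨y, hy⟩ with h | h | h <;> simp only at h <;> subst h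
    · exact hca hadj
    · exact hcb hadj
    · exact G.irrefl hadj
  have hAB : G'.connectedComponentMk ⟨a, haS⟩ = G'.connectedComponentMk ⟨b, hbS⟩ :=
    ConnectedComponent.sound (Adj.reachable (by simp [hG', hab]))
  have hCA : G'.connectedComponentMk ⟨c, hcS⟩ ≠ G'.connectedComponentMk ⟨a, haS⟩ := by
    intro h
    have := isolated_reach hciso (ConnectedComponent.exact h)
    exact hne_ca (congrArg Subtype.val this)
  rw [Nat.card_eq_two_iff]
  refine ⟨G'.connectedComponentMk ⟨a, haS⟩, G'.connectedComponentMk ⟨c, hcS⟩, hCA.symm, ?_⟩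
  rw [Set.eq_univ_iff_forall]
  intro x
  obtain ⟨y, rfl⟩ := x.exists_rep
  rcases hmem y with h | h | h
  · have : y = ⟨a, haS⟩ := Subtype.ext h
    subst this; left; rfl
  · have : y = ⟨b, hbS⟩ := Subtype.ext h
    subst this; left; exact hAB.symm
  · have : y = ⟨c, hcS⟩ := Subtype.ext h
    subst this; right; exact Set.mem_singleton _

/-! ### Computations for the complete bipartite graph -/

lemma mixed_connected {m n : ℕ} (X : Finset (Fin m ⊕ Fin n))
    (hL : ∃ a, Sum.inl a ∈ X) (hR : ∃ b, Sum.inr b ∈ X) :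
    ((completeBipartiteGraph (Fin m) (Fin n)).induce (X : Set (Fin m ⊕ Fin n))).Connected := by
  obtain ⟨a, ha⟩ := hL
  obtain ⟨b, hb⟩ := hR
  rw [connected_iff]
  have haS : (Sum.inl a : Fin m ⊕ Fin n) ∈ (X : Set (Fin m ⊕ Fin n)) := by simpa using ha
  have hbS : (Sum.inr b : Fin m ⊕ Fin n) ∈ (X : Set (Fin m ⊕ Fin n)) := by simpa using hb
  refine ⟨?_, ⟨⟨_, haS⟩⟩⟩
  have key : ∀ x : (X : Set (Fin m ⊕ Fin n)),
      ((completeBipartiteGraph (Fin m) (Fin n)).induce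
        (X : Set (Fin m ⊕ Fin n))).Reachable x ⟨Sum.inl a, haS⟩ := by
    rintro ⟨x, hx⟩
    cases x with
    | inl u =>
      have h1 : ((completeBipartiteGraph (Fin m) (Fin n)).induce
          (X : Set (Fin m ⊕ Fin n))).Adj ⟨Sum.inl u, hx⟩ ⟨Sum.inr b, hbS⟩ := Or.inl ⟨rfl, rfl⟩
      have h2 : ((completeBipartiteGraph (Fin m) (Fin n)).induce
          (X : Set (Fin m ⊕ Fin n))).Adj ⟨Sum.inr b, hbS⟩ ⟨Sum.inl a, haS⟩ := Or.inr ⟨rfl, rfl⟩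
      exact h1.reachable.trans h2.reachable
    | inr v =>
      have h1 : ((completeBipartiteGraph (Fin m) (Fin n)).induce
          (X : Set (Fin m ⊕ Fin n))).Adj ⟨Sum.inr v, hx⟩ ⟨Sum.inl a, haS⟩ := Or.inr ⟨rfl, rfl⟩
      exact h1.reachable
  intro x y
  exact (key x).trans (key y).symm

lemma oneside_edgeless {m n : ℕ} (X : Finset (Fin m ⊕ Fin n))
    (h : (∀ a, Sum.inl a ∉ X) ∨ (∀ b, Sum.inr b ∉ X)) :
    ∀ u ∈ X, ∀ v ∈ X, ¬ (completeBipartiteGraph (Fin m) (Fin n)).Adj u v := by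
  intro u hu v hv hadj
  rcases h with h | h
  · cases u with
    | inl a => exact h a hu
    | inr a =>
      cases v with
      | inl b => exact h b hv
      | inr b => simp at hadj
  · cases u with
    | inr a => exact h a hu
    | inl a =>
      cases v with
      | inr b => exact h b hv
      | inl b => simp at hadj

lemma q32K (m n : ℕ) : qij (completeBipartiteGraph (Fin m) (Fin n)) 3 2 = 0 := by
  classical
  rw [qij_eq_zero_iff]
  intro X hX
  by_cases hL : ∃ a, Sum.inl a ∈ X
  · by_cases hR : ∃ b, Sum.inr b ∈ X
    · rw [(card_cc_eq_one_iff _).mpr (mixed_connected X hL hR)]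
      omega
    · push_neg at hR
      rw [(induce_edgeless_iff _ _).mpr (oneside_edgeless X (Or.inr hR)), hX]
      omega
  · push_neg at hL
    rw [(induce_edgeless_iff _ _).mpr (oneside_edgeless X (Or.inl hL)), hX]
    omega

lemma qiiK (m n : ℕ) (i : ℕ) (hi : 1 ≤ i) :
    qij (completeBipartiteGraph (Fin m) (Fin n)) i i = m.choose i + n.choose i := by
  classical
  set L := univ.image (Sum.inl : Fin m → Fin m ⊕ Fin n) with hL
  set R := univ.image (Sum.inr : Fin n → Fin m ⊕ Fin n) with hR
  have hxL : ∀ x, x ∈ L ↔ ∃ u, x = Sum.inl u := by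
    intro x; rw [hL]; simp [Finset.mem_image, eq_comm]
  have hxR : ∀ x, x ∈ R ↔ ∃ v, x = Sum.inr v := by
    intro x; rw [hR]; simp [Finset.mem_image, eq_comm]
  have hdisjLR : Disjoint L R := by
    rw [Finset.disjoint_left]
    intro x hx1 hx2
    obtain ⟨u, rfl⟩ := (hxL x).mp hx1
    obtain ⟨v, hv⟩ := (hxR _).mp hx2
    exact Sum.inl_ne_inr hv
  have key := qij_diag (completeBipartiteGraph (Fin m) (Fin n)) i hi
    (fun t : Bool => if t then L else R) ?_ ?_
  · rw [key, Fintype.sum_bool, if_pos rfl, if_neg Bool.false_ne_true]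
    have h1 : L.card = m := by
      rw [hL, Finset.card_image_of_injective _ Sum.inl_injective, card_univ, Fintype.card_fin]
    have h2 : R.card = n := by
      rw [hR, Finset.card_image_of_injective _ Sum.inr_injective, card_univ, Fintype.card_fin]
    rw [h1, h2]
  · intro t s hts
    cases t <;> cases s
    · exact absurd rfl hts
    · simpa using hdisjLR.symm
    · simpa using hdisjLR
    · exact absurd rfl hts
  · intro X hX
    constructor
    · intro hedg
      by_cases hRex : ∃ b, Sum.inr b ∈ X
      · refine ⟨false, fun x hx => ?_⟩
        simp only [if_neg Bool.false_ne_true]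
        cases x with
        | inr v => exact (hxR _).mpr ⟨v, rfl⟩
        | inl u =>
          obtain ⟨b, hb⟩ := hRex
          exact absurd (Or.inl ⟨rfl, rfl⟩) (hedg _ hx _ hb)
      · refine ⟨true, fun x hx => ?_⟩
        simp only [if_pos rfl]
        cases x with
        | inl u => exact (hxL _).mpr ⟨u, rfl⟩
        | inr v => exact absurd ⟨v, hx⟩ hRex
    · rintro ⟨t, ht⟩
      cases t
      · simp only [if_neg Bool.false_ne_true] at ht
        refine oneside_edgeless X (Or.inl fun a ha => ?_)
        obtain ⟨u, hu⟩ := (hxR _).mp (ht ha)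
        exact Sum.inl_ne_inr hu
      · simp only [if_pos rfl] at ht
        refine oneside_edgeless X (Or.inr fun b hb => ?_)
        obtain ⟨u, hu⟩ := (hxL _).mp (ht hb)
        exact Sum.inl_ne_inr hu.symm

/-! ### Multiset binomial lemma -/

lemma sum_choose_max (S : Multiset ℕ) (M : ℕ) (h : ∀ s ∈ S, s ≤ M) :
    (S.map (fun s => s.choose M)).sum = S.count M := by
  induction S using Multiset.induction with
  | empty => simp
  | cons a S ih =>
    rw [Multiset.map_cons, Multiset.sum_cons, Multiset.count_cons,
      ih (fun s hs => h s (Multiset.mem_cons_of_mem hs))]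
    rcases lt_or_eq_of_le (h a (Multiset.mem_cons_self a S)) with hlt | heq
    · rw [Nat.choose_eq_zero_of_lt hlt]
      simp [(ne_of_lt hlt).symm]
    · subst heq
      simp [Nat.choose_self]
      omega

lemma sum_eq_sum_elems (T : Multiset ℕ) :
    (T.map (fun t => t.choose 1)).sum = T.sum := by
  rw [Multiset.map_congr rfl (fun x _ => Nat.choose_one_right x), Multiset.map_id']

lemma multiset_binom : ∀ (N : ℕ) (S T : Multiset ℕ), Multiset.card S + Multiset.card T ≤ N →
    (∀ s ∈ S, 1 ≤ s) → (∀ t ∈ T, 1 ≤ t) →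
    (∀ i, 1 ≤ i → (S.map (fun s => s.choose i)).sum = (T.map (fun t => t.choose i)).sum) →
    S = T := by
  intro N
  induction N with
  | zero =>
    intro S T hcard _ _ _
    have h1 : Multiset.card S = 0 := by omega
    have h2 : Multiset.card T = 0 := by omega
    rw [Multiset.card_eq_zero] at h1 h2
    rw [h1, h2]
  | succ N ih =>
    intro S T hcard hS hT h
    by_cases hS0 : S = 0
    · subst hS0
      have h1 : (0:ℕ) = T.sum := by simpa [sum_eq_sum_elems] using h 1 le_rfl
      rcases Multiset.empty_or_exists_mem T with h0 | ⟨t, ht⟩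
      · rw [h0]
      · have h2 := Multiset.single_le_sum (fun x _ => Nat.zero_le x) t ht
        have := hT t ht
        omega
    by_cases hT0 : T = 0
    · subst hT0
      have h1 : S.sum = 0 := by simpa [sum_eq_sum_elems] using h 1 le_rfl
      rcases Multiset.empty_or_exists_mem S with h0 | ⟨s, hs⟩
      · rw [h0]
      · have h2 := Multiset.single_le_sum (fun x _ => Nat.zero_le x) s hs
        have := hS s hs
        omega
    -- both nonempty
    have htf : (S + T).toFinset.Nonempty := by
      rcases Multiset.empty_or_exists_mem S with h0 | ⟨s, hs⟩
      · exact absurd h0 hS0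
      · exact ⟨s, Multiset.mem_toFinset.mpr (Multiset.mem_add.mpr (Or.inl hs))⟩
    obtain ⟨M, hMmem, hMle⟩ : ∃ M, (M ∈ S ∨ M ∈ T) ∧ ∀ x, x ∈ S ∨ x ∈ T → x ≤ M := by
      refine ⟨(S + T).toFinset.max' htf, ?_, ?_⟩
      · have := (S + T).toFinset.max'_mem htf
        rw [Multiset.mem_toFinset, Multiset.mem_add] at this
        exact this
      · intro x hx
        exact Finset.le_max' _ x (Multiset.mem_toFinset.mpr (Multiset.mem_add.mpr hx))
    have hM1 : 1 ≤ M := by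
      rcases hMmem with hm | hm
      · exact hS M hm
      · exact hT M hm
    have hcount : S.count M = T.count M := by
      rw [← sum_choose_max S M (fun s hs => hMle s (Or.inl hs)),
        ← sum_choose_max T M (fun t ht => hMle t (Or.inr ht))]
      exact h M hM1
    have hMS : M ∈ S ∧ M ∈ T := by
      rw [← Multiset.count_pos, ← Multiset.count_pos, hcount]
      rcases hMmem with hm | hm
      · rw [← hcount]; constructor <;> exact Multiset.count_pos.mpr hm
      · constructor <;> exact Multiset.count_pos.mpr hm
    obtain ⟨S', rfl⟩ := Multiset.exists_cons_of_mem hMS.1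
    obtain ⟨T', rfl⟩ := Multiset.exists_cons_of_mem hMS.2
    have : S' = T' := by
      refine ih S' T' ?_ (fun s hs => hS s (Multiset.mem_cons_of_mem hs))
        (fun t ht => hT t (Multiset.mem_cons_of_mem ht)) ?_
      · simp only [Multiset.card_cons] at hcard; omega
      · intro i hi
        have := h i hi
        simp only [Multiset.map_cons, Multiset.sum_cons] at this
        omega
    rw [this]

end QAux

open QAux Finset in
theorem completeBipartite_Q_unique (m n : ℕ) (hn : 1 ≤ n) (hmn : n ≤ m)
    {W : Type*} [Fintype W] (H : SimpleGraph W)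
    (hQ : QEquiv H (completeBipartiteGraph (Fin m) (Fin n))) :
    Nonempty (H ≃g completeBipartiteGraph (Fin m) (Fin n)) := by
  classical
  -- Step 1: no induced K₂ ∪ K₁
  have h32 : qij H 3 2 = 0 := (hQ 3 2).trans (q32K m n)
  have noK2K1 : ∀ a b c : W, H.Adj a b → ¬ H.Adj c a → ¬ H.Adj c b → False := by
    intro a b c hab hca hcb
    have hne_ab : a ≠ b := hab.ne
    have hne_ca : c ≠ a := fun h => hcb (h ▸ hab)
    have hne_cb : c ≠ b := fun h => hca (h ▸ hab.symm)
    have hcard : ({a, b, c} : Finset W).card = 3 :=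
      Finset.card_eq_three.mpr ⟨a, b, c, hne_ab, hne_ca.symm, hne_cb.symm, rfl⟩
    exact (qij_eq_zero_iff H 3 2).mp h32 _ hcard (triple_cc_two H hab hca hcb)
  -- Step 2: the non-adjacency setoid
  letI s : Setoid W := ⟨fun u v => u = v ∨ ¬ H.Adj u v, ⟨fun _ => Or.inl rfl, ?_, ?_⟩⟩
  case refine_1 =>
    rintro u v (rfl | h)
    · exact Or.inl rfl
    · exact Or.inr (fun h' => h h'.symm)
  case refine_2 =>
    rintro u v w (rfl | huv) hvw
    · exact hvw
    · rcases hvw with rfl | hvw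
      · exact Or.inr huv
      · by_cases huw : u = w
        · exact Or.inl huw
        · refine Or.inr fun hA => ?_
          exact noK2K1 u w v hA (fun h => huv h.symm) hvw
  letI : DecidableEq (Quotient s) := Classical.decEq _
  haveI : Finite (Quotient s) := Quotient.finite s
  haveI : Fintype (Quotient s) := Fintype.ofFinite _
  set fiber : Quotient s → Finset W := fun q => univ.filter (fun w => ⟦w⟧ = q) with hfiber
  have hmem_fiber : ∀ (w : W) q, w ∈ fiber q ↔ ⟦w⟧ = q := by
    intro w q; rw [hfiber]; simp
  have hadj_iff : ∀ u v : W, H.Adj u v ↔ (⟦u⟧ : Quotient s) ≠ ⟦v⟧ := by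
    intro u v
    constructor
    · intro hA heq
      rcases Quotient.exact heq with rfl | hnA
      · exact H.irrefl hA
      · exact hnA hA
    · intro hne
      by_contra hA
      exact hne (Quotient.sound (Or.inr hA))
  -- Step 3: counting independent sets
  have hcount : ∀ i, 1 ≤ i →
      ∑ q : Quotient s, (fiber q).card.choose i = m.choose i + n.choose i := by
    intro i hi
    have hd := qij_diag H i hi fiber ?_ ?_
    · rw [← hd, hQ i i, qiiK m n i hi]
    · intro t t' htt'
      rw [Finset.disjoint_left]
      intro w hw1 hw2
      exact htt' (((hmem_fiber w t).mp hw1).symm.trans ((hmem_fiber w t').mp hw2))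
    · intro X hX
      constructor
      · intro hedg
        obtain ⟨w0, hw0⟩ : X.Nonempty := by rw [← Finset.card_pos, hX]; omega
        refine ⟨⟦w0⟧, fun w hw => (hmem_fiber w _).mpr (Quotient.sound ?_)⟩
        by_cases hww : w = w0
        · exact Or.inl hww
        · exact Or.inr (hedg w hw w0 hw0)
      · rintro ⟨q, hsub⟩
        intro a ha b hb hA
        have : (⟦a⟧ : Quotient s) = ⟦b⟧ :=
          ((hmem_fiber a q).mp (hsub ha)).trans ((hmem_fiber b q).mp (hsub hb)).symm
        exact (hadj_iff a b).mp hA this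
  -- Step 4: the multiset of class sizes is {m, n}
  have hmulti : (univ : Finset (Quotient s)).val.map (fun q => (fiber q).card)
      = (m ::ₘ n ::ₘ 0) := by
    apply multiset_binom (Multiset.card ((univ : Finset (Quotient s)).val.map
      (fun q => (fiber q).card)) + 2) _ _ le_rfl
    · intro x hx
      obtain ⟨q, -, rfl⟩ := Multiset.mem_map.mp hx
      obtain ⟨w, rfl⟩ := q.exists_rep
      have : w ∈ fiber ⟦w⟧ := (hmem_fiber w _).mpr rfl
      exact Finset.card_pos.mpr ⟨w, this⟩
    · intro t ht
      rcases Multiset.mem_cons.mp ht with rfl | ht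
      · omega
      · rcases Multiset.mem_cons.mp ht with rfl | ht
        · omega
        · exact absurd ht (Multiset.notMem_zero t)
    · intro i hi
      have lhs_eq : ((Multiset.map (fun q => (fiber q).card)
          (univ : Finset (Quotient s)).val).map (fun x => x.choose i)).sum
          = ∑ q : Quotient s, (fiber q).card.choose i := by
        rw [Multiset.map_map, Finset.sum_eq_multiset_sum]
        rfl
      rw [lhs_eq, hcount i hi]
      simp
  -- Step 5: extract the two classes
  have hm_mem : m ∈ (univ : Finset (Quotient s)).val.map (fun q => (fiber q).card) := by
    rw [hmulti]; exact Multiset.mem_cons_self m _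
  obtain ⟨q1, -, hq1⟩ := Multiset.mem_map.mp hm_mem
  obtain ⟨rest, hrest⟩ := Multiset.exists_cons_of_mem (Finset.mem_univ q1 : q1 ∈ univ)
  have hrest' : rest.map (fun q => (fiber q).card) = ({n} : Multiset ℕ) := by
    have := hmulti
    rw [hrest, Multiset.map_cons, hq1] at this
    exact (Multiset.cons_inj_right m).mp this
  have hrestcard : Multiset.card rest = 1 := by
    have := congrArg Multiset.card hrest'
    simpa using this
  obtain ⟨q2, rfl⟩ := Multiset.card_eq_one.mp hrestcard
  have hq2 : (fiber q2).card = n := by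
    rw [Multiset.map_singleton] at hrest'
    exact Multiset.singleton_inj.mp hrest'
  have hq12 : q1 ≠ q2 := by
    have hnd := (univ : Finset (Quotient s)).nodup
    rw [hrest] at hnd
    intro h
    exact (Multiset.nodup_cons.mp hnd).1 (h ▸ Multiset.mem_singleton_self q2)
  have hq_all : ∀ q : Quotient s, q = q1 ∨ q = q2 := by
    intro q
    have : q ∈ (univ : Finset (Quotient s)).val := Finset.mem_univ q
    rw [hrest, Multiset.mem_cons, Multiset.mem_singleton] at this
    exact this
  -- Step 6: build the isomorphism
  set p : W → Prop := fun w => (⟦w⟧ : Quotient s) = q1 with hp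
  have hcard1 : Fintype.card {w // p w} = m := by
    rw [Fintype.card_subtype]
    have hEq : (univ.filter (fun w => p w)) = fiber q1 := rfl
    rw [hEq, hq1]
  have hcard2 : Fintype.card {w // ¬ p w} = n := by
    rw [Fintype.card_subtype]
    have hEq : (univ.filter (fun w => ¬ p w)) = fiber q2 := by
      ext w
      rw [Finset.mem_filter, hmem_fiber]
      simp only [Finset.mem_univ, true_and, hp]
      constructor
      · intro hne
        rcases hq_all ⟦w⟧ with h | h
        · exact absurd h hne
        · exact h
      · intro h2 h1
        exact hq12 (h1.symm.trans h2)
    rw [hEq, hq2]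
  let e1 : {w // p w} ≃ Fin m := Fintype.equivFinOfCardEq hcard1
  let e2 : {w // ¬ p w} ≃ Fin n := Fintype.equivFinOfCardEq hcard2
  let e : W ≃ (Fin m ⊕ Fin n) := (Equiv.sumCompl p).symm.trans (Equiv.sumCongr e1 e2)
  have heL : ∀ (w : W) (h : p w), e w = Sum.inl (e1 ⟨w, h⟩) := by
    intro w h
    show (Equiv.sumCongr e1 e2) ((Equiv.sumCompl p).symm w) = _
    rw [Equiv.sumCompl_symm_apply_of_pos (p := p) h]
    rfl
  have heR : ∀ (w : W) (h : ¬ p w), e w = Sum.inr (e2 ⟨w, h⟩) := by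
    intro w h
    show (Equiv.sumCongr e1 e2) ((Equiv.sumCompl p).symm w) = _
    rw [Equiv.sumCompl_symm_apply_of_neg (p := p) h]
    rfl
  refine ⟨⟨e, ?_⟩⟩
  intro a b
  by_cases pa : p a <;> by_cases pb : p b
  · rw [heL a pa, heL b pb]
    refine iff_of_false (by simp) ?_
    rw [hadj_iff]
    simp only [ne_eq, not_not]
    exact pa.trans pb.symm
  · rw [heL a pa, heR b pb]
    refine iff_of_true (Or.inl ⟨rfl, rfl⟩) ?_
    rw [hadj_iff]
    intro h
    exact pb (h.symm.trans pa)
  · rw [heR a pa, heL b pb]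
    refine iff_of_true (Or.inr ⟨rfl, rfl⟩) ?_
    rw [hadj_iff]
    intro h
    exact pa (h.trans pb)
  · rw [heR a pa, heR b pb]
    refine iff_of_false (by simp) ?_
    rw [hadj_iff]
    simp only [ne_eq, not_not]
    rcases hq_all ⟦a⟧ with ha | ha
    · exact absurd ha pa
    · rcases hq_all ⟦b⟧ with hb | hb
      · exact absurd hb pb
      · exact ha.trans hb.symm
end
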